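/- arXiv:1906.04399 — 8 statements merged into one kernel-verified Lean document; each statement's English description precedes it below -/
import Mathlib

section
/- (Stanley shuffle invariance) Let π, τ be permutations of disjoint finite alphabets and π', τ' permutations of (possibly different) disjoint alphabets. If Des(π) = Des(π') and Des(τ) = Des(τ'), then there is a descent-set-preserving bijection between the shuffle set π ⧢ τ and the shuffle set π' ⧢ τ'. Equivalently, the multiset of descent sets of shuffles of π and τ depends only on Des(π), Des(τ), and the lengths of π and τ. -/
open scoped Classical

/-- Successor in `Fin n` (cyclic, but only used under the guard `i+1 < n`). -/
def finSucc {n : ℕ} (i : Fin n) : Fin n := ⟨((i : ℕ) + 1) % n, Nat.mod_lt _ i.pos⟩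

def pDes {n : ℕ} (π : Equiv.Perm (Fin n)) : Finset (Fin n) :=
  Finset.univ.filter fun i => (i : ℕ) + 1 < n ∧ π (finSucc i) < π i

/-- The inverse `J`-class `R_J^{-1} = {σ : Des σ⁻¹ ⊆ J}`, as a multiset. -/
noncomputable def RinvM (n : ℕ) (J : Finset (Fin n)) : Multiset (Equiv.Perm (Fin n)) :=
  (Finset.univ.filter fun σ : Equiv.Perm (Fin n) => pDes σ⁻¹ ⊆ J).val

/-- Product of multisets of permutations (with multiplicity). -/
def mprod {n : ℕ} (A B : Multiset (Equiv.Perm (Fin n))) : Multiset (Equiv.Perm (Fin n)) :=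
  A.bind fun a => B.map fun b => a * b

/-- The composition `co(J)` of `n` corresponding to `J ⊆ [n-1]`, as a list of parts. -/
def compList (n : ℕ) (J : Finset (Fin n)) : List ℕ :=
  let l := (J.sort (· ≤ ·)).map fun i => (i : ℕ) + 1
  List.zipWith (· - ·) (l ++ [n]) (0 :: l)

/-- `co(J)` as a multiset of parts (so `compM n J = compM n K` means `J ∼ K`). -/
def compM (n : ℕ) (J : Finset (Fin n)) : Multiset ℕ := (compList n J : Multiset ℕ)
/-- `IsShuffle u v w`: `w` is an interleaving of `u` and `v`. -/
inductive IsShuffle {α : Type*} : List α → List α → List α → Prop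
  | nil : IsShuffle [] [] []
  | left {a : α} {u v w : List α} : IsShuffle u v w → IsShuffle (a :: u) v (a :: w)
  | right {a : α} {u v w : List α} : IsShuffle u v w → IsShuffle u (a :: v) (a :: w)

/-- `IsShuffleN L w`: `w` is a shuffle of all the words in the list `L`. -/
inductive IsShuffleN {α : Type*} : List (List α) → List α → Prop
  | nil : IsShuffleN [] []
  | cons {u : List α} {L : List (List α)} {w z : List α} :
      IsShuffleN L w → IsShuffle u w z → IsShuffleN (u :: L) z

/-- Split a list into consecutive blocks of the given sizes. -/
def splitSizes {α : Type*} : List α → List ℕ → List (List α)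
  | _, [] => []
  | l, k :: ks => l.take k :: splitSizes (l.drop k) ks

/-- The one-line notation of a permutation of `Fin n`. -/
def oneLine {n : ℕ} (π : Equiv.Perm (Fin n)) : List (Fin n) :=
  (List.finRange n).map π
/-- Descent set of a word of integers (0-indexed positions). -/
noncomputable def DesW (w : List ℤ) : Finset ℕ :=
  (Finset.range w.length).filter fun i =>
    if h : i + 1 < w.length then w.get ⟨i + 1, h⟩ < w.get ⟨i, Nat.lt_of_succ_lt h⟩
    else False

/-!
Fix `K` and let `n = |p| + |t|`. Cutting `{0, …, n-1}` into the blocks of the composition of `n`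
whose inner boundaries are the `i + 1` with `i ∈ K`, a word `w` of length `n` has `Des w ⊆ K` iff
it increases on every block. A shuffle of `p` and `t` that increases on every block is determined
by the numbers `(a, b)` of letters of `p` and of `t` in each block: the block is the sorted merge
of the corresponding factors of `p` and `t`. The pairs `(a, b)` that occur are those for which
these factors of `p` and of `t` are increasing, a condition on `|p|`, `|t|`, `Des p` and `Des t`
only. So `#{w ∈ p ⧢ t | Des w ⊆ K}` does not change when `(p, t)` is replaced by `(p', t')`;
Möbius inversion over the subsets of `K` gives the same for `Des w = K`, and matching the fibres
of `Des` produces the bijection.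
-/

open List

section Fibers

variable {β ι : Type*} [DecidableEq ι]

theorem card_filter_subset_eq_sum_powerset (A : Finset β) (f : β → Finset ι) (K : Finset ι) :
    (A.filter (f · ⊆ K)).card = ∑ J ∈ K.powerset, (A.filter (f · = J)).card := by
  rw [Finset.card_eq_sum_card_fiberwise (t := K.powerset) fun x hx =>
    Finset.mem_powerset.mpr (Finset.mem_filter.mp hx).2]
  refine Finset.sum_congr rfl fun J hJ => ?_
  rw [Finset.filter_filter]
  exact congrArg _ (Finset.filter_congr fun x _ =>
    ⟨And.right, fun h => ⟨h ▸ Finset.mem_powerset.mp hJ, h⟩⟩)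

theorem card_filter_eq_of_forall_card_filter_subset_eq {A B : Finset β} {f : β → Finset ι}
    (h : ∀ K, (A.filter (f · ⊆ K)).card = (B.filter (f · ⊆ K)).card) (K : Finset ι) :
    (A.filter (f · = K)).card = (B.filter (f · = K)).card := by
  induction K using Finset.strongInduction with
  | H K ih =>
    have hK := h K
    have hlt : ∀ J ∈ K.powerset.erase K, J ⊂ K := fun J hJ =>
      (Finset.mem_powerset.mp (Finset.mem_of_mem_erase hJ)).ssubset_of_ne
        (Finset.ne_of_mem_erase hJ)
    rw [card_filter_subset_eq_sum_powerset, card_filter_subset_eq_sum_powerset,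
      ← Finset.sum_erase_add _ _ (Finset.mem_powerset_self K),
      ← Finset.sum_erase_add _ _ (Finset.mem_powerset_self K),
      Finset.sum_congr rfl fun J hJ => ih J (hlt J hJ)] at hK
    exact Nat.add_left_cancel hK

end Fibers

theorem exists_bijOn_of_card_filter_eq {β γ : Type*} [Nonempty β] [DecidableEq γ]
    {A B : Finset β} (f : β → γ)
    (h : ∀ c, (A.filter (f · = c)).card = (B.filter (f · = c)).card) :
    ∃ g : β → β, Set.BijOn g A B ∧ ∀ x ∈ A, f (g x) = f x := by
  have hfib : ∀ c, ∃ g : β → β, Set.BijOn g ↑(A.filter (f · = c)) ↑(B.filter (f · = c)) :=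
    fun c => (A.filter _).finite_toSet.exists_bijOn_of_encard_eq (by
      simp only [Set.encard_coe_eq_coe_finsetCard, h c])
  choose g hg using hfib
  have hmaps : ∀ x ∈ A, g (f x) x ∈ B ∧ f (g (f x) x) = f x := fun x hx => by
    simpa using (hg (f x)).mapsTo (Finset.mem_filter.mpr ⟨hx, rfl⟩)
  refine ⟨fun x => g (f x) x, ⟨fun x hx => (hmaps x hx).1, ?_, ?_⟩, fun x hx => (hmaps x hx).2⟩
  · intro x hx y hy hxy
    have hf : f x = f y := by
      rw [← (hmaps x hx).2, ← (hmaps y hy).2]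
      exact congrArg f hxy
    refine (hg (f x)).injOn (Finset.mem_filter.mpr ⟨hx, rfl⟩)
      (Finset.mem_filter.mpr ⟨hy, hf.symm⟩) ?_
    simp only at hxy
    rw [hxy, hf]
  · intro y hy
    obtain ⟨x, hx, hgx⟩ := (hg (f y)).surjOn (Finset.mem_filter.mpr ⟨hy, rfl⟩)
    obtain ⟨hxA, hfx⟩ := Finset.mem_filter.mp hx
    exact ⟨x, hxA, by simp only [hfx, hgx]⟩
section Shuffle

variable {α : Type*}

theorem IsShuffle.nil_left : ∀ v : List α, IsShuffle [] v v
  | [] => .nil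
  | _ :: v => .right (nil_left v)

theorem IsShuffle.nil_right : ∀ u : List α, IsShuffle u [] u
  | [] => .nil
  | _ :: u => .left (nil_right u)

theorem IsShuffle.perm {u v w : List α} (h : IsShuffle u v w) : w ~ u ++ v := by
  induction h with
  | nil => rfl
  | left _ ih => exact ih.cons _
  | right _ ih => exact (ih.cons _).trans perm_middle.symm

theorem IsShuffle.sublist_left {u v w : List α} (h : IsShuffle u v w) : u <+ w := by
  induction h with
  | nil => exact .slnil
  | left _ ih => exact ih.cons_cons _
  | right _ ih => exact ih.cons _

theorem IsShuffle.symm {u v w : List α} (h : IsShuffle u v w) : IsShuffle v u w := by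
  induction h with
  | nil => exact .nil
  | left _ ih => exact .right ih
  | right _ ih => exact .left ih

theorem IsShuffle.append {u v w u' v' w' : List α} (h : IsShuffle u v w)
    (h' : IsShuffle u' v' w') : IsShuffle (u ++ u') (v ++ v') (w ++ w') := by
  induction h with
  | nil => exact h'
  | left _ ih => exact .left ih
  | right _ ih => exact .right ih

theorem IsShuffle.exists_of_append {u v : List α} :
    ∀ {w w' : List α}, IsShuffle u v (w ++ w') →
      ∃ u₁ u₂ v₁ v₂, u = u₁ ++ u₂ ∧ v = v₁ ++ v₂ ∧ IsShuffle u₁ v₁ w ∧ IsShuffle u₂ v₂ w'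
  | [], _, h => ⟨[], u, [], v, rfl, rfl, .nil, h⟩
  | _ :: _, _, .left h => by
    obtain ⟨u₁, u₂, v₁, v₂, rfl, rfl, h₁, h₂⟩ := exists_of_append h
    exact ⟨_ :: u₁, u₂, v₁, v₂, rfl, rfl, .left h₁, h₂⟩
  | _ :: _, _, .right h => by
    obtain ⟨u₁, u₂, v₁, v₂, rfl, rfl, h₁, h₂⟩ := exists_of_append h
    exact ⟨u₁, u₂, _ :: v₁, v₂, rfl, rfl, .right h₁, h₂⟩

theorem IsShuffle.merge (le : α → α → Bool) (u v : List α) : IsShuffle u v (u.merge v le) := by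
  induction u generalizing v with
  | nil => simpa using nil_left v
  | cons a u ihu =>
    induction v with
    | nil => simpa using nil_right (a :: u)
    | cons b v ihv =>
      rw [cons_merge_cons]
      split
      · exact .left (ihu _)
      · exact .right ihv

end Shuffle

section Blocks

variable {α : Type*}

theorem splitSizes_eq_splitWrtCompositionAux :
    ∀ (l : List α) (ks : List ℕ), splitSizes l ks = l.splitWrtCompositionAux ks
  | _, [] => rfl
  | l, k :: ks => by
    rw [splitSizes, splitWrtCompositionAux_cons, splitSizes_eq_splitWrtCompositionAux]

@[simp]
theorem length_splitSizes (l : List α) (ks : List ℕ) : (splitSizes l ks).length = ks.length := by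
  rw [splitSizes_eq_splitWrtCompositionAux, length_splitWrtCompositionAux]

theorem flatten_splitSizes {l : List α} {ks : List ℕ} (h : ks.sum = l.length) :
    (splitSizes l ks).flatten = l := by
  rw [splitSizes_eq_splitWrtCompositionAux, flatten_splitWrtCompositionAux h]

theorem map_length_splitSizes {l : List α} {ks : List ℕ} (h : ks.sum ≤ l.length) :
    (splitSizes l ks).map length = ks := by
  rw [splitSizes_eq_splitWrtCompositionAux, map_length_splitWrtCompositionAux h]

theorem splitSizes_flatten (L : List (List α)) : splitSizes L.flatten (L.map length) = L := by
  have hsum : (L.map length).sum = L.flatten.length := (length_flatten ..).symm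
  rw [eq_iff_flatten_eq, flatten_splitSizes hsum, map_length_splitSizes hsum.le]
  exact ⟨rfl, rfl⟩

inductive BlockShuffle : List (List α) → List (List α) → List (List α) → Prop
  | nil : BlockShuffle [] [] []
  | cons {u v w : List α} {us vs ws : List (List α)} :
      IsShuffle u v w → BlockShuffle us vs ws → BlockShuffle (u :: us) (v :: vs) (w :: ws)

namespace BlockShuffle

variable {us vs ws : List (List α)}

theorem symm (h : BlockShuffle us vs ws) : BlockShuffle vs us ws := by
  induction h with
  | nil => exact .nil
  | cons h _ ih => exact .cons h.symm ih

theorem isShuffle_flatten (h : BlockShuffle us vs ws) :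
    IsShuffle us.flatten vs.flatten ws.flatten := by
  induction h with
  | nil => exact .nil
  | cons h _ ih => exact h.append ih

theorem length_eq (h : BlockShuffle us vs ws) : us.length = vs.length := by
  induction h with
  | nil => rfl
  | cons _ _ ih => simp [ih]

theorem map_length (h : BlockShuffle us vs ws) :
    ws.map length = zipWith (· + ·) (us.map length) (vs.map length) := by
  induction h with
  | nil => rfl
  | cons h _ ih => simp [ih, h.perm.length_eq]

theorem map_countP (h : BlockShuffle us vs ws) (P : α → Bool)
    (hu : ∀ x ∈ us.flatten, P x) (hv : ∀ x ∈ vs.flatten, ¬ P x) :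
    ws.map (countP P) = us.map length := by
  induction h with
  | nil => rfl
  | cons h _ ih =>
    simp only [flatten_cons, mem_append] at hu hv
    simp only [map_cons, ih (fun x hx => hu x (.inr hx)) (fun x hx => hv x (.inr hx)),
      h.perm.countP_eq, countP_append, countP_eq_length.mpr (fun x hx => hu x (.inl hx)),
      countP_eq_zero.mpr (fun x hx => hv x (.inl hx)), add_zero]

variable [LinearOrder α]

theorem pairwise_left (h : BlockShuffle us vs ws) (hw : ∀ w ∈ ws, w.Pairwise (· ≤ ·)) :
    ∀ u ∈ us, u.Pairwise (· ≤ ·) := by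
  induction h with
  | nil => simp
  | cons h _ ih =>
    simp only [forall_mem_cons] at hw ⊢
    exact ⟨hw.1.sublist h.sublist_left, ih hw.2⟩

theorem eq_of_pairwise {ws' : List (List α)} (h : BlockShuffle us vs ws)
    (h' : BlockShuffle us vs ws') (hw : ∀ w ∈ ws, w.Pairwise (· ≤ ·))
    (hw' : ∀ w ∈ ws', w.Pairwise (· ≤ ·)) : ws = ws' := by
  induction h generalizing ws' with
  | nil => cases h'; rfl
  | cons h _ ih =>
    cases h' with
    | cons h' hs' =>
      simp only [forall_mem_cons] at hw hw'
      exact congrArg₂ _ (Perm.eq_of_pairwise' hw.1 hw'.1 (h.perm.trans h'.perm.symm))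
        (ih hs' hw.2 hw'.2)

theorem exists_pairwise : ∀ {us vs : List (List α)}, us.length = vs.length →
    (∀ u ∈ us, u.Pairwise (· ≤ ·)) → (∀ v ∈ vs, v.Pairwise (· ≤ ·)) →
    ∃ ws, BlockShuffle us vs ws ∧ ∀ w ∈ ws, w.Pairwise (· ≤ ·)
  | [], [], _, _, _ => ⟨[], .nil, by simp⟩
  | [], _ :: _, hl, _, _ | _ :: _, [], hl, _, _ => by simp at hl
  | u :: _, v :: _, hl, hu, hv => by
    simp only [forall_mem_cons] at hu hv
    obtain ⟨ws, hws, hsorted⟩ := exists_pairwise (by simpa using hl) hu.2 hv.2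
    exact ⟨_, .cons (.merge _ u v) hws, forall_mem_cons.mpr ⟨hu.1.merge hv.1, hsorted⟩⟩

end BlockShuffle

theorem IsShuffle.exists_blockShuffle {u v w : List α} (h : IsShuffle u v w) {ks : List ℕ}
    (hks : ks.sum = w.length) :
    ∃ us vs, us.flatten = u ∧ vs.flatten = v ∧ BlockShuffle us vs (splitSizes w ks) := by
  induction ks generalizing u v w with
  | nil =>
    obtain rfl : w = [] := length_eq_zero_iff.mp (by simpa using hks.symm)
    cases h
    exact ⟨[], [], rfl, rfl, .nil⟩
  | cons k ks ih =>
    rw [← take_append_drop k w] at h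
    obtain ⟨u₁, u₂, v₁, v₂, rfl, rfl, h₁, h₂⟩ := h.exists_of_append
    obtain ⟨us, vs, rfl, rfl, hs⟩ := ih h₂ (by simp at hks ⊢; omega)
    exact ⟨u₁ :: us, v₁ :: vs, rfl, rfl, .cons h₁ hs⟩

end Blocks

section Cuts

variable {α : Type*}

def cuts (ks : List ℕ) : Set ℕ := Set.range fun i => (ks.take i).sum

theorem cuts_cons (k : ℕ) (ks : List ℕ) : cuts (k :: ks) = insert 0 ((k + ·) '' cuts ks) := by
  ext j
  simp only [cuts, Set.mem_range, Set.mem_insert_iff, Set.mem_image]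
  constructor
  · rintro ⟨_ | i, rfl⟩
    · simp
    · exact .inr ⟨_, ⟨i, rfl⟩, by simp⟩
  · rintro (rfl | ⟨_, ⟨i, rfl⟩, rfl⟩)
    · exact ⟨0, rfl⟩
    · exact ⟨i + 1, by simp⟩

theorem forall_isChain_splitSizes_iff {R : α → α → Prop} {x : List α} {ks : List ℕ}
    (h : ks.sum = x.length) :
    (∀ c ∈ splitSizes x ks, IsChain R c) ↔
      ∀ i (hi : i + 1 < x.length), i + 1 ∉ cuts ks → R x[i] x[i + 1] := by
  induction ks generalizing x with
  | nil =>
    obtain rfl : x = [] := length_eq_zero_iff.mp (by simpa using h.symm)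
    simp [splitSizes]
  | cons k ks ih =>
    simp only [sum_cons] at h
    rw [splitSizes, forall_mem_cons, ih (by simp; omega), isChain_iff_getElem, cuts_cons]
    simp only [length_take, length_drop, getElem_take, getElem_drop, Set.mem_insert_iff,
      Set.mem_image]
    constructor
    · rintro ⟨h₁, h₂⟩ i hi hcut
      rcases lt_trichotomy (i + 1) k with hlt | rfl | hgt
      · exact h₁ i (by omega)
      · exact absurd (.inr ⟨0, ⟨0, rfl⟩, rfl⟩) hcut
      · obtain ⟨j, rfl⟩ : ∃ j, i = k + j := ⟨i - k, by omega⟩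
        exact h₂ j (by omega) fun hc => hcut (.inr ⟨_, hc, by omega⟩)
    · intro H
      refine ⟨fun i hi => H i (by omega) ?_, fun i hi hc => H (k + i) (by omega) ?_⟩
      · rintro (h0 | ⟨j, -, hj⟩) <;> omega
      · rintro (h0 | ⟨j, hj, hjk⟩)
        · omega
        · exact hc (by rwa [show j = i + 1 by omega] at hj)

end Cuts

section Profiles

variable {α : Type*} [LinearOrder α]

def BlocksSorted (ks : List ℕ) (w : List α) : Prop :=
  ∀ c ∈ splitSizes w ks, c.Pairwise (· ≤ ·)

theorem blocksSorted_iff {ks : List ℕ} {x : List α} (h : ks.sum = x.length) :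
    BlocksSorted ks x ↔ ∀ i (hi : i + 1 < x.length), i + 1 ∉ cuts ks → x[i] ≤ x[i + 1] := by
  simp only [BlocksSorted, ← isChain_iff_pairwise]
  exact forall_isChain_splitSizes_iff h

def blockCounts (u v : List α) (ks : List ℕ) (w : List α) : List ℕ × List ℕ :=
  ((splitSizes w ks).map (countP (· ∈ u)), (splitSizes w ks).map (countP (· ∈ v)))

structure IsBlockProfile (ks : List ℕ) (u v : List α) (a b : List ℕ) : Prop where
  length_eq : a.length = b.length
  zipWith_add : zipWith (· + ·) a b = ks
  sum_left : a.sum = u.length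
  sum_right : b.sum = v.length
  sorted_left : BlocksSorted a u
  sorted_right : BlocksSorted b v

variable {u v w : List α} {ks : List ℕ}

theorem BlockShuffle.map_countP_mem {us vs ws : List (List α)} (hd : u.Disjoint v)
    (h : BlockShuffle us vs ws) (hu : us.flatten = u) (hv : vs.flatten = v) :
    (ws.map (countP (· ∈ u)), ws.map (countP (· ∈ v))) = (us.map length, vs.map length) := by
  subst hu hv
  exact Prod.ext (h.map_countP _ (by simp) fun x hx hxu => hd (of_decide_eq_true hxu) hx)
    (h.symm.map_countP _ (by simp) fun x hx hxv => hd hx (of_decide_eq_true hxv))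

theorem IsShuffle.exists_blockCounts_eq (hd : u.Disjoint v) (h : IsShuffle u v w)
    (hks : ks.sum = w.length) :
    ∃ us vs, us.flatten = u ∧ vs.flatten = v ∧ BlockShuffle us vs (splitSizes w ks) ∧
      blockCounts u v ks w = (us.map length, vs.map length) := by
  obtain ⟨us, vs, hu, hv, hbs⟩ := h.exists_blockShuffle hks
  exact ⟨us, vs, hu, hv, hbs, hbs.map_countP_mem hd hu hv⟩

theorem IsShuffle.isBlockProfile_blockCounts (hd : u.Disjoint v) (h : IsShuffle u v w)
    (hks : ks.sum = w.length) (hw : BlocksSorted ks w) :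
    IsBlockProfile ks u v (blockCounts u v ks w).1 (blockCounts u v ks w).2 := by
  obtain ⟨us, vs, rfl, rfl, hbs, hcounts⟩ := h.exists_blockCounts_eq hd hks
  rw [hcounts]
  exact
    { length_eq := by simp [hbs.length_eq]
      zipWith_add := by rw [← hbs.map_length, map_length_splitSizes hks.le]
      sum_left := (length_flatten ..).symm
      sum_right := (length_flatten ..).symm
      sorted_left := by rw [BlocksSorted, splitSizes_flatten]; exact hbs.pairwise_left hw
      sorted_right := by rw [BlocksSorted, splitSizes_flatten]; exact hbs.symm.pairwise_left hw }

theorem injOn_blockCounts (hd : u.Disjoint v) (hks : ks.sum = u.length + v.length) :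
    Set.InjOn (blockCounts u v ks) {w | IsShuffle u v w ∧ BlocksSorted ks w} := by
  rintro w₁ ⟨h₁, hw₁⟩ w₂ ⟨h₂, hw₂⟩ heq
  have hlen : ∀ {w}, IsShuffle u v w → ks.sum = w.length := fun h => by
    simp [hks, h.perm.length_eq]
  obtain ⟨us₁, vs₁, hu₁, hv₁, hbs₁, hc₁⟩ := h₁.exists_blockCounts_eq hd (hlen h₁)
  obtain ⟨us₂, vs₂, hu₂, hv₂, hbs₂, hc₂⟩ := h₂.exists_blockCounts_eq hd (hlen h₂)
  rw [hc₁, hc₂, Prod.mk.injEq] at heq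
  obtain rfl : us₁ = us₂ := eq_iff_flatten_eq.mpr ⟨hu₁.trans hu₂.symm, heq.1⟩
  obtain rfl : vs₁ = vs₂ := eq_iff_flatten_eq.mpr ⟨hv₁.trans hv₂.symm, heq.2⟩
  have hblocks := hbs₁.eq_of_pairwise hbs₂ hw₁ hw₂
  rw [← flatten_splitSizes (hlen h₁), hblocks, flatten_splitSizes (hlen h₂)]

theorem IsBlockProfile.exists_isShuffle {a b : List ℕ} (hd : u.Disjoint v)
    (hp : IsBlockProfile ks u v a b) :
    ∃ w, IsShuffle u v w ∧ BlocksSorted ks w ∧ blockCounts u v ks w = (a, b) := by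
  obtain ⟨ws, hbs, hws⟩ := BlockShuffle.exists_pairwise (by simp [hp.length_eq])
    hp.sorted_left hp.sorted_right
  have hu := flatten_splitSizes hp.sum_left
  have hv := flatten_splitSizes hp.sum_right
  have hsplit : splitSizes ws.flatten ks = ws := by
    rw [← hp.zipWith_add, ← map_length_splitSizes hp.sum_left.le,
      ← map_length_splitSizes hp.sum_right.le, ← hbs.map_length, splitSizes_flatten]
  refine ⟨ws.flatten, hu ▸ hv ▸ hbs.isShuffle_flatten, ?_, ?_⟩
  · rw [BlocksSorted, hsplit]
    exact hws
  rw [blockCounts, hsplit, hbs.map_countP_mem hd hu hv, map_length_splitSizes hp.sum_left.le,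
    map_length_splitSizes hp.sum_right.le]

end Profiles

section Finite

variable {α : Type*}

noncomputable def shuffles (u v : List α) : Finset (List α) :=
  (u ++ v).permutations.toFinset.filter (IsShuffle u v)

theorem mem_shuffles {u v w : List α} : w ∈ shuffles u v ↔ IsShuffle u v w := by
  simpa [shuffles] using fun h : IsShuffle u v w => h.perm

theorem coe_shuffles (u v : List α) : (shuffles u v : Set (List α)) = {w | IsShuffle u v w} :=
  Set.ext fun _ => mem_shuffles

variable [LinearOrder α] {u v : List α} {ks : List ℕ}

theorem mem_image_blockCounts_iff (hd : u.Disjoint v) (hks : ks.sum = u.length + v.length)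
    {ab : List ℕ × List ℕ} :
    ab ∈ ((shuffles u v).filter (BlocksSorted ks)).image (blockCounts u v ks) ↔
      IsBlockProfile ks u v ab.1 ab.2 := by
  simp only [Finset.mem_image, Finset.mem_filter, mem_shuffles]
  constructor
  · rintro ⟨w, ⟨h, hw⟩, rfl⟩
    exact h.isBlockProfile_blockCounts hd (by simp [hks, h.perm.length_eq]) hw
  · intro hp
    obtain ⟨w, h, hw, hc⟩ := hp.exists_isShuffle hd
    exact ⟨w, ⟨h, hw⟩, hc⟩

theorem card_filter_blocksSorted_congr {u' v' : List α} (hd : u.Disjoint v)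
    (hd' : u'.Disjoint v') (hks : ks.sum = u.length + v.length)
    (hks' : ks.sum = u'.length + v'.length)
    (hprof : ∀ a b, IsBlockProfile ks u v a b ↔ IsBlockProfile ks u' v' a b) :
    ((shuffles u v).filter (BlocksSorted ks)).card =
      ((shuffles u' v').filter (BlocksSorted ks)).card := by
  have hinj : ∀ {u v : List α}, u.Disjoint v → ks.sum = u.length + v.length →
      Set.InjOn (blockCounts u v ks) ↑((shuffles u v).filter (BlocksSorted ks)) :=
    fun hd hks => (injOn_blockCounts hd hks).mono fun w hw => by
      simpa [mem_shuffles] using hw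
  rw [← Finset.card_image_of_injOn (hinj hd hks),
    ← Finset.card_image_of_injOn (hinj hd' hks')]
  congr 1
  ext ab
  rw [mem_image_blockCounts_iff hd hks, mem_image_blockCounts_iff hd' hks', hprof]

end Finite

section Descents

theorem mem_desW {w : List ℤ} {i : ℕ} :
    i ∈ DesW w ↔ ∃ h : i + 1 < w.length, w[i + 1] < w[i] := by
  simp only [DesW, Finset.mem_filter, Finset.mem_range]
  grind

theorem blocksSorted_iff_forall_mem_desW {ks : List ℕ} {x : List ℤ} (h : ks.sum = x.length) :
    BlocksSorted ks x ↔ ∀ i ∈ DesW x, i + 1 ∈ cuts ks := by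
  simp only [blocksSorted_iff h, mem_desW, forall_exists_index]
  refine forall_congr' fun i => forall_congr' fun hi => ?_
  rw [← not_lt, not_imp_not]

theorem IsBlockProfile.of_desW_eq {ks a b : List ℕ} {u v u' v' : List ℤ}
    (hp : IsBlockProfile ks u v a b) (hu : u.length = u'.length) (hv : v.length = v'.length)
    (hDu : DesW u = DesW u') (hDv : DesW v = DesW v') : IsBlockProfile ks u' v' a b where
  length_eq := hp.length_eq
  zipWith_add := hp.zipWith_add
  sum_left := hp.sum_left.trans hu
  sum_right := hp.sum_right.trans hv
  sorted_left := (blocksSorted_iff_forall_mem_desW (hp.sum_left.trans hu)).mpr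
    (hDu ▸ (blocksSorted_iff_forall_mem_desW hp.sum_left).mp hp.sorted_left)
  sorted_right := (blocksSorted_iff_forall_mem_desW (hp.sum_right.trans hv)).mpr
    (hDv ▸ (blocksSorted_iff_forall_mem_desW hp.sum_right).mp hp.sorted_right)

def descentComposition (K : Finset ℕ) (n : ℕ) : CompositionAsSet n where
  boundaries := Finset.univ.filter fun j => j = 0 ∨ j = Fin.last n ∨ (j : ℕ) - 1 ∈ K
  zero_mem := by simp
  getLast_mem := by simp

theorem mem_cuts_descentComposition_blocks {K : Finset ℕ} {n i : ℕ} (hi : i + 1 < n) :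
    i + 1 ∈ cuts (descentComposition K n).blocks ↔ i ∈ K := by
  set c := descentComposition K n
  have hb : (⟨i + 1, by omega⟩ : Fin (n + 1)) ∈ c.boundaries ↔ i ∈ K := by
    change _ ∈ Finset.univ.filter _ ↔ _
    simp only [Finset.mem_filter, Finset.mem_univ, true_and, Fin.ext_iff, Fin.val_zero,
      Fin.val_last, Nat.add_sub_cancel, Nat.add_one_ne_zero, hi.ne, false_or]
  rw [← hb, c.mem_boundaries_iff_exists_blocks_sum_take_eq, cuts, Set.mem_range]
  constructor
  · rintro ⟨m, hm⟩
    refine ⟨m, ?_, hm⟩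
    by_contra! hge
    rw [take_of_length_le (by simp [c.card_boundaries_eq_succ_length] at hge ⊢; omega),
      c.blocks_sum] at hm
    omega
  · rintro ⟨m, -, hm⟩
    exact ⟨m, hm⟩

theorem desW_subset_iff_blocksSorted {w : List ℤ} {K : Finset ℕ} :
    DesW w ⊆ K ↔ BlocksSorted (descentComposition K w.length).blocks w := by
  rw [blocksSorted_iff_forall_mem_desW (CompositionAsSet.blocks_sum _)]
  refine forall_congr' fun i => imp_congr_right fun hi => ?_
  exact (mem_cuts_descentComposition_blocks (mem_desW.mp hi).1).symm

theorem card_filter_desW_subset_eq {p t p' t' : List ℤ} (hd : p.Disjoint t)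
    (hd' : p'.Disjoint t') (hlp : p.length = p'.length) (hlt : t.length = t'.length)
    (hdp : DesW p = DesW p') (hdt : DesW t = DesW t') (K : Finset ℕ) :
    ((shuffles p t).filter (DesW · ⊆ K)).card =
      ((shuffles p' t').filter (DesW · ⊆ K)).card := by
  set ks := (descentComposition K (p.length + t.length)).blocks
  have hks : ks.sum = p.length + t.length := CompositionAsSet.blocks_sum _
  have hfilter : ∀ {u v : List ℤ}, u.length + v.length = p.length + t.length →
      (shuffles u v).filter (DesW · ⊆ K) = (shuffles u v).filter (BlocksSorted ks) :=
    fun huv => Finset.filter_congr fun w hw => by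
      rw [desW_subset_iff_blocksSorted, (mem_shuffles.mp hw).perm.length_eq, length_append,
        huv]
  rw [hfilter rfl, hfilter (by omega)]
  exact card_filter_blocksSorted_congr hd hd' hks (by omega) fun a b =>
    ⟨(·.of_desW_eq hlp hlt hdp hdt), (·.of_desW_eq hlp.symm hlt.symm hdp.symm hdt.symm)⟩

end Descents

/-- Stanley's shuffle invariance. If `p, t` are words on disjoint
alphabets of distinct letters, and likewise `p', t'`, with `|p| = |p'|`, `|t| = |t'|`,
`Des p = Des p'` and `Des t = Des t'`, then there is a descent-set-preserving bijection
between the shuffle sets `p ⧢ t` and `p' ⧢ t'`. -/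
theorem shuffle_invariance (p t p' t' : List ℤ)
    (h1 : (p ++ t).Nodup) (h2 : (p' ++ t').Nodup)
    (hlp : p.length = p'.length) (hlt : t.length = t'.length)
    (hdp : DesW p = DesW p') (hdt : DesW t = DesW t') :
    ∃ g : List ℤ → List ℤ,
      Set.BijOn g {w | IsShuffle p t w} {w | IsShuffle p' t' w} ∧
      ∀ w, IsShuffle p t w → DesW (g w) = DesW w := by
  have hfibers := card_filter_eq_of_forall_card_filter_subset_eq
    (card_filter_desW_subset_eq h1.disjoint h2.disjoint hlp hlt hdp hdt)
  obtain ⟨g, hg, hgD⟩ := exists_bijOn_of_card_filter_eq DesW hfibers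
  rw [coe_shuffles, coe_shuffles] at hg
  exact ⟨g, hg, fun w hw => hgD w (mem_shuffles.mpr hw)⟩
end

section
/- Let U = (U_1, U_2, ...) be an ordered set partition of [n] of type co(J), δ_U the associated permutation, and U* = {i ∈ [n-1] : i and i+1 lie in the same block of U}. Then for every π ∈ S_n, Des(δ_{W}·π) = Des(δ_U) ∪ (Des(π) ∩ U*), where W is the ordered set partition whose i-th block is π(U_i). -/
/-!
Write `β x` for the index of the block of `U` containing `x`. Since `δ_U` maps the blocks, in
order, onto consecutive intervals of values and is increasing on each block, `δ_U y < δ_U x` iff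
`β y < β x`, or `β y = β x` and `y < x`. Likewise `δ_W` maps `π(U_k)` increasingly into the `k`-th
interval, so `δ_W (π y) < δ_W (π x)` iff `β y < β x`, or `β y = β x` and `π y < π x`. For
`x = i`, `y = i + 1` the comparison `y < x` fails, so `i` is a descent of `δ_U` iff
`β (i + 1) < β i`, and a descent of `δ_W π` iff moreover, or instead, `i ∈ U*` and `i` is a
descent of `π`.
-/

open scoped Classical

/-- `U` is an ordered set partition of `Fin n` of type `c` (blocks listed in order,
with `|U_i| = c_i`, pairwise disjoint, covering). -/
def IsOSP (n : ℕ) (c : List ℕ) (U : List (Finset (Fin n))) : Prop :=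
  U.map Finset.card = c ∧ U.Pairwise Disjoint ∧ ∀ x : Fin n, ∃ s ∈ U, x ∈ s

/-- `U` is an ordered set partition of `Fin n` (nonempty pairwise disjoint blocks covering). -/
def OSPn (n : ℕ) (U : List (Finset (Fin n))) : Prop :=
  U.Pairwise Disjoint ∧ (∀ s ∈ U, s.Nonempty) ∧ ∀ x : Fin n, ∃ s ∈ U, x ∈ s

/-- `δ` is the permutation `δ_U` associated to an ordered set partition `U` of type `c`:
it is increasing on each block `U_i`, and sends `U_i` onto the `i`-th consecutive
interval of values (of length `c_i`). -/
def IsDelta {n : ℕ} (c : List ℕ) (U : List (Finset (Fin n))) (δ : Equiv.Perm (Fin n)) : Prop :=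
  ∀ i (h : i < U.length),
    (∀ x ∈ U.get ⟨i, h⟩, ∀ y ∈ U.get ⟨i, h⟩, x < y → δ x < δ y) ∧
    (∀ x ∈ U.get ⟨i, h⟩, (c.take i).sum ≤ (δ x : ℕ) ∧ (δ x : ℕ) < (c.take (i + 1)).sum)

/-- `U* = {i : i and i+1 lie in the same block of U}` (0-indexed positions). -/
def Ustar (n : ℕ) (U : List (Finset (Fin n))) : Finset (Fin n) :=
  Finset.univ.filter fun i => (i : ℕ) + 1 < n ∧ ∃ s ∈ U, i ∈ s ∧ finSucc i ∈ s

open Finset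

lemma List.Pairwise.index_eq_of_mem_getElem {α : Type*} {U : List (Finset α)}
    (hU : U.Pairwise _root_.Disjoint) {a b : ℕ} {ha : a < U.length} {hb : b < U.length} {x : α}
    (hxa : x ∈ U[a]) (hxb : x ∈ U[b]) : a = b := by
  by_contra hne
  rcases Nat.lt_or_gt_of_ne hne with hab | hab
  · exact Finset.disjoint_left.mp (List.pairwise_iff_getElem.mp hU a b ha hb hab) hxa hxb
  · exact Finset.disjoint_left.mp (List.pairwise_iff_getElem.mp hU b a hb ha hab) hxb hxa

lemma List.exists_mem_getElem_of_forall_exists_mem {α : Type*} {U : List (Finset α)}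
    (hU : ∀ x, ∃ s ∈ U, x ∈ s) (x : α) : ∃ a, ∃ ha : a < U.length, x ∈ U[a] := by
  obtain ⟨s, hs, hxs⟩ := hU x
  obtain ⟨a, ha, rfl⟩ := List.mem_iff_getElem.mp hs
  exact ⟨a, ha, hxs⟩

section

variable {n : ℕ}

lemma lt_finSucc {i : Fin n} (hi : (i : ℕ) + 1 < n) : i < finSucc i := by
  simp [Fin.lt_def, finSucc, Nat.mod_eq_of_lt hi]

lemma mem_pDes_iff {σ : Equiv.Perm (Fin n)} {i : Fin n} :
    i ∈ pDes σ ↔ (i : ℕ) + 1 < n ∧ σ (finSucc i) < σ i := by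
  simp [pDes]

lemma mem_Ustar_iff {U : List (Finset (Fin n))} (hU : U.Pairwise Disjoint) {i : Fin n}
    {a b : ℕ} {ha : a < U.length} {hb : b < U.length} (hia : i ∈ U[a])
    (hib : finSucc i ∈ U[b]) : i ∈ Ustar n U ↔ (i : ℕ) + 1 < n ∧ a = b := by
  simp only [Ustar, mem_filter, mem_univ, true_and, and_congr_right_iff]
  refine fun _ ↦ ⟨?_, ?_⟩
  · rintro ⟨s, hs, his, hsucc⟩
    obtain ⟨k, hk, rfl⟩ := List.mem_iff_getElem.mp hs
    exact (hU.index_eq_of_mem_getElem hia his).trans (hU.index_eq_of_mem_getElem hsucc hib)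
  · rintro rfl
    exact ⟨U[a], List.getElem_mem ha, hia, hib⟩

end

namespace IsDelta

variable {n : ℕ} {c : List ℕ} {U : List (Finset (Fin n))} {δ : Equiv.Perm (Fin n)}

lemma apply_lt_apply_of_index_lt (hδ : IsDelta c U δ) {a b : ℕ} {ha : a < U.length}
    {hb : b < U.length} (hab : a < b) {x y : Fin n} (hx : x ∈ U[a]) (hy : y ∈ U[b]) :
    δ x < δ y :=
  calc (δ x : ℕ) < (c.take (a + 1)).sum := ((hδ a ha).2 x (by simpa using hx)).2
    _ ≤ (c.take b).sum := List.monotone_sum_take c hab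
    _ ≤ δ y := ((hδ b hb).2 y (by simpa using hy)).1

lemma apply_lt_apply_iff (hδ : IsDelta c U δ) {a b : ℕ} {ha : a < U.length}
    {hb : b < U.length} {x y : Fin n} (hx : x ∈ U[a]) (hy : y ∈ U[b]) :
    δ x < δ y ↔ a < b ∨ (a = b ∧ x < y) := by
  rcases lt_trichotomy a b with hab | rfl | hab
  · simpa [hab] using hδ.apply_lt_apply_of_index_lt hab hx hy
  · have hmono : StrictMonoOn δ (U[a] : Set (Fin n)) := fun x hx y hy hxy ↦
      (hδ a ha).1 x (by simpa using hx) y (by simpa using hy) hxy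
    simpa using hmono.lt_iff_lt hx hy
  · simpa [hab.not_gt, hab.ne'] using (hδ.apply_lt_apply_of_index_lt hab hy hx).le.not_gt

lemma apply_lt_apply_iff_of_map_image {π : Equiv.Perm (Fin n)}
    (hδ : IsDelta c (U.map fun s => s.image π) δ) {a b : ℕ} {ha : a < U.length}
    {hb : b < U.length} {x y : Fin n} (hx : x ∈ U[a]) (hy : y ∈ U[b]) :
    δ (π x) < δ (π y) ↔ a < b ∨ (a = b ∧ π x < π y) :=
  hδ.apply_lt_apply_iff (ha := by simpa using ha) (hb := by simpa using hb)
    (by simpa using mem_image_of_mem π hx) (by simpa using mem_image_of_mem π hy)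

end IsDelta

theorem des_rho_general (n : ℕ) (J : Finset (Fin n))
    (U : List (Finset (Fin n))) (hU : IsOSP n (compList n J) U)
    (π δU δW : Equiv.Perm (Fin n))
    (hδU : IsDelta (compList n J) U δU)
    (hδW : IsDelta (compList n J) (U.map fun s => s.image π) δW) :
    pDes (δW * π) = pDes δU ∪ (pDes π ∩ Ustar n U) := by
  obtain ⟨-, hdisj, hcov⟩ := hU
  ext i
  simp only [mem_union, mem_inter, mem_pDes_iff, Equiv.Perm.mul_apply]
  by_cases hi : (i : ℕ) + 1 < n
  · obtain ⟨a, ha, hia⟩ := List.exists_mem_getElem_of_forall_exists_mem hcov i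
    obtain ⟨b, hb, hib⟩ := List.exists_mem_getElem_of_forall_exists_mem hcov (finSucc i)
    rw [mem_Ustar_iff hdisj hia hib, hδU.apply_lt_apply_iff hib hia,
      hδW.apply_lt_apply_iff_of_map_image hib hia]
    have hsucc_not_lt : ¬ finSucc i < i := (lt_finSucc hi).not_gt
    grind
  · simp [hi]

/-- For an ordered set partition `U` of type `co(J)` and any `π ∈ S_n`,
`Des(δ_W · π) = Des(δ_U) ∪ (Des(π) ∩ U*)`, where `W` is the ordered set partition whose
`i`-th block is `π(U_i)`. -/
theorem des_rho (n : ℕ) (J : Finset (Fin n)) (hJ : ∀ i ∈ J, (i : ℕ) + 1 < n)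
    (U : List (Finset (Fin n))) (hU : IsOSP n (compList n J) U)
    (π δU δW : Equiv.Perm (Fin n))
    (hδU : IsDelta (compList n J) U δU)
    (hδW : IsDelta (compList n J) (U.map fun s => s.image π) δW) :
    pDes (δW * π) = pDes δU ∪ (pDes π ∩ Ustar n U) :=
  des_rho_general n J U hU π δU δW hδU hδW
end

section
/- Let U be an ordered set partition of [n] of type co(J). Define σ_U(τ) to be the element of the shuffle std(τ_1...τ_{j_1}) ⧢ std(τ_{j_1+1}...τ_{j_2})^{+j_1} ⧢ ... in which block U_i holds the positions of the i-th standardized segment. Then Des(σ_U(τ)) = Des(δ_U) ∪ {u ∈ U* : δ_U(u) ∈ Des(τ)}. -/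
open scoped Classical

/-- `σ = σ_U(τ)`: the element of the shuffle
`std(τ_1…τ_{j_1}) ⧢ std(τ_{j_1+1}…τ_{j_2})^{+j_1} ⧢ ⋯` in which the block `U_i` holds
the positions of the `i`-th standardized segment.  Characterized by: `σ` maps `U_i`
onto the `i`-th consecutive interval of values, and on the sorted elements of `U_i`
the relative order of the values of `σ` agrees with the relative order of the
corresponding segment of `τ`. -/
def IsSigma {n : ℕ} (c : List ℕ) (U : List (Finset (Fin n))) (τ σ : Equiv.Perm (Fin n)) :
    Prop :=
  ∀ i (h : i < U.length),
    (∀ x ∈ U.get ⟨i, h⟩,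
      (c.take i).sum ≤ (σ x : ℕ) ∧ (σ x : ℕ) < (c.take (i + 1)).sum) ∧
    (∀ k l (hk : k < ((U.get ⟨i, h⟩).sort (· ≤ ·)).length)
        (hl : l < ((U.get ⟨i, h⟩).sort (· ≤ ·)).length)
        (h1 : (c.take i).sum + k < n) (h2 : (c.take i).sum + l < n),
      (σ (((U.get ⟨i, h⟩).sort (· ≤ ·)).get ⟨k, hk⟩) <
          σ (((U.get ⟨i, h⟩).sort (· ≤ ·)).get ⟨l, hl⟩) ↔
        τ ⟨(c.take i).sum + k, h1⟩ < τ ⟨(c.take i).sum + l, h2⟩))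

/-! If `u` and `u + 1` lie in different blocks `U_i` and `U_j`, then `σ` and `δ_U` both compare
them as `i` compares with `j`, since both send blocks to consecutive intervals of values. If they
lie in the same block `U_i`, they are its `k`-th and `(k+1)`-th smallest elements for some `k`, so
`δ_U` sends them to the consecutive values `S + k` and `S + k + 1`, where
`S = |U_1| + ⋯ + |U_{i-1}|`, and by construction `σ` compares them as `τ` compares those two
values. -/

open Finset

lemma val_finSucc {n : ℕ} {i : Fin n} (h : (i : ℕ) + 1 < n) : (finSucc i : ℕ) = i + 1 :=
  Nat.mod_eq_of_lt h

lemma mem_pDes {n : ℕ} {π : Equiv.Perm (Fin n)} {i : Fin n} :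
    i ∈ pDes π ↔ (i : ℕ) + 1 < n ∧ π (finSucc i) < π i := by
  simp [pDes]

lemma eq_add_of_strictMono_of_mem_Ico {m S : ℕ} {f : Fin m → ℕ} (hf : StrictMono f)
    (hmem : ∀ k, f k ∈ Ico S (S + m)) (k : Fin m) : f k = S + k := by
  have hcard : (Ico S (S + m)).card = m := by simp
  have hshift : StrictMono fun k : Fin m => S + (k : ℕ) := fun a b h => by simpa using h
  exact (congrFun (orderEmbOfFin_unique hcard hmem hf) k).trans
    (congrFun (orderEmbOfFin_unique hcard (fun k => by simp) hshift) k).symm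

lemma Finset.succ_index_of_sort_get_val_eq_succ {n : ℕ} {s : Finset (Fin n)}
    {k l : Fin (s.sort (· ≤ ·)).length}
    (h : ((s.sort (· ≤ ·)).get l : ℕ) = (s.sort (· ≤ ·)).get k + 1) : (l : ℕ) = k + 1 := by
  have hL := (sortedLT_sort s).strictMono_get
  have hkl : k < l := hL.lt_iff_lt.mp (Fin.lt_def.mpr (by omega))
  by_contra hne
  have hnext : k < ⟨k + 1, by omega⟩ := Fin.lt_def.mpr (by simp)
  have hlast : (⟨k + 1, by omega⟩ : Fin _) < l := Fin.lt_def.mpr (by simp; omega)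
  have h1 := Fin.lt_def.mp (hL hnext)
  have h2 := Fin.lt_def.mp (hL hlast)
  omega

section Blocks

variable {n : ℕ} {c : List ℕ} {U : List (Finset (Fin n))}

lemma eq_of_mem_get_of_mem_get (hdisj : U.Pairwise Disjoint) {i j : Fin U.length} {x : Fin n}
    (hi : x ∈ U.get i) (hj : x ∈ U.get j) : i = j := by
  by_contra hne
  rcases lt_or_gt_of_ne hne with h | h
  · exact disjoint_left.mp (hdisj.rel_get_of_lt h) hi hj
  · exact disjoint_left.mp (hdisj.rel_get_of_lt h) hj hi

lemma mem_Ustar_iff_s4 (hdisj : U.Pairwise Disjoint) {i j : Fin U.length} {u : Fin n}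
    (hn : (u : ℕ) + 1 < n) (hi : u ∈ U.get i) (hj : finSucc u ∈ U.get j) :
    u ∈ Ustar n U ↔ i = j := by
  simp only [Ustar, mem_filter, mem_univ, true_and, hn]
  constructor
  · rintro ⟨s, hs, hs', hs''⟩
    obtain ⟨k, rfl⟩ := List.mem_iff_get.mp hs
    exact (eq_of_mem_get_of_mem_get hdisj hi hs').trans (eq_of_mem_get_of_mem_get hdisj hs'' hj)
  · rintro rfl
    exact ⟨U.get i, List.get_mem _ _, hi, hj⟩

lemma sum_take_succ_eq_add_card (hc : U.map card = c) (i : Fin U.length) :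
    (c.take (i + 1)).sum = (c.take i).sum + (U.get i).card := by
  subst hc
  rw [List.sum_take_succ _ _ (by simp)]
  simp

def SendsBlocksToIntervals (c : List ℕ) (U : List (Finset (Fin n))) (π : Equiv.Perm (Fin n)) :
    Prop :=
  ∀ i (h : i < U.length), ∀ x ∈ U.get ⟨i, h⟩,
    (c.take i).sum ≤ (π x : ℕ) ∧ (π x : ℕ) < (c.take (i + 1)).sum

lemma SendsBlocksToIntervals.lt_of_lt {π : Equiv.Perm (Fin n)} (hπ : SendsBlocksToIntervals c U π)
    {i j : Fin U.length} (hij : i < j) {x y : Fin n} (hx : x ∈ U.get i) (hy : y ∈ U.get j) :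
    π x < π y := by
  have hmono : (c.take (i + 1)).sum ≤ (c.take j).sum := List.monotone_sum_take c hij
  have hxj := (hπ i i.isLt x hx).2
  have hyi := (hπ j j.isLt y hy).1
  exact Fin.lt_def.mpr (by omega)

lemma SendsBlocksToIntervals.lt_iff_lt_of_ne {π : Equiv.Perm (Fin n)}
    (hπ : SendsBlocksToIntervals c U π) {i j : Fin U.length} (hij : i ≠ j) {x y : Fin n}
    (hx : x ∈ U.get i) (hy : y ∈ U.get j) : π x < π y ↔ i < j := by
  rcases lt_or_gt_of_ne hij with h | h
  · exact iff_of_true (hπ.lt_of_lt h hx hy) h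
  · exact iff_of_false (asymm (hπ.lt_of_lt h hy hx)) (asymm h)

lemma SendsBlocksToIntervals.mem_pDes_iff {π π' : Equiv.Perm (Fin n)}
    (hπ : SendsBlocksToIntervals c U π) (hπ' : SendsBlocksToIntervals c U π')
    {i j : Fin U.length} (hij : i ≠ j) {u : Fin n} (hi : u ∈ U.get i)
    (hj : finSucc u ∈ U.get j) : u ∈ pDes π ↔ u ∈ pDes π' := by
  simp only [mem_pDes, hπ.lt_iff_lt_of_ne (Ne.symm hij) hj hi,
    hπ'.lt_iff_lt_of_ne (Ne.symm hij) hj hi]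

lemma IsDelta.sendsBlocksToIntervals {δ : Equiv.Perm (Fin n)} (hδ : IsDelta c U δ) :
    SendsBlocksToIntervals c U δ :=
  fun i h => (hδ i h).2

lemma IsSigma.sendsBlocksToIntervals {τ σ : Equiv.Perm (Fin n)} (hσ : IsSigma c U τ σ) :
    SendsBlocksToIntervals c U σ :=
  fun i h => (hσ i h).1

lemma IsDelta.apply_sort_get {δ : Equiv.Perm (Fin n)} (hc : U.map card = c) (hδ : IsDelta c U δ)
    (i : Fin U.length) (k : Fin ((U.get i).sort (· ≤ ·)).length) :
    (δ (((U.get i).sort (· ≤ ·)).get k) : ℕ) = (c.take i).sum + k := by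
  have hmem : ∀ k, ((U.get i).sort (· ≤ ·)).get k ∈ U.get i :=
    fun k => (mem_sort _).1 (List.get_mem _ _)
  refine eq_add_of_strictMono_of_mem_Ico (f := fun k => (δ (((U.get i).sort (· ≤ ·)).get k) : ℕ))
    (fun k l hkl => (hδ i i.isLt).1 _ (hmem k) _ (hmem l) ((sortedLT_sort _).strictMono_get hkl))
    (fun k => ?_) k
  have hb := hδ.sendsBlocksToIntervals i i.isLt _ (hmem k)
  rw [length_sort, ← sum_take_succ_eq_add_card hc]
  exact mem_Ico.mpr hb

lemma IsDelta.notMem_pDes {δ : Equiv.Perm (Fin n)} (hδ : IsDelta c U δ) {i : Fin U.length}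
    {u : Fin n} (hn : (u : ℕ) + 1 < n) (hu : u ∈ U.get i) (hu' : finSucc u ∈ U.get i) :
    u ∉ pDes δ := fun h =>
  asymm (mem_pDes.mp h).2 <|
    (hδ i i.isLt).1 u hu _ hu' (Fin.lt_def.mpr (by rw [val_finSucc hn]; omega))

lemma IsSigma.mem_pDes_iff {τ σ δ : Equiv.Perm (Fin n)} (hc : U.map card = c)
    (hδ : IsDelta c U δ) (hσ : IsSigma c U τ σ) {i : Fin U.length} {u : Fin n}
    (hn : (u : ℕ) + 1 < n) (hu : u ∈ U.get i) (hu' : finSucc u ∈ U.get i) :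
    u ∈ pDes σ ↔ δ u ∈ pDes τ := by
  obtain ⟨k, rfl⟩ := List.mem_iff_get.mp ((mem_sort (α := Fin n) (· ≤ ·)).2 hu)
  obtain ⟨l, hl⟩ := List.mem_iff_get.mp ((mem_sort (α := Fin n) (· ≤ ·)).2 hu')
  have hlk : (l : ℕ) = k + 1 :=
    succ_index_of_sort_get_val_eq_succ (by rw [hl, val_finSucc hn])
  have hδk := hδ.apply_sort_get hc i k
  have hδl := hδ.apply_sort_get hc i l
  have hbound := (δ (((U.get i).sort (· ≤ ·)).get l)).isLt
  have key := (hσ i i.isLt).2 l k l.isLt k.isLt (by omega) (by omega)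
  simp only [Fin.eta, hl] at key
  have hkn : (c.take i).sum + k < n := by omega
  have hδu : δ (((U.get i).sort (· ≤ ·)).get k) = ⟨(c.take i).sum + k, hkn⟩ := Fin.ext hδk
  have hδu' : finSucc (⟨(c.take i).sum + k, hkn⟩ : Fin n) = ⟨(c.take i).sum + l, by omega⟩ :=
    Fin.ext (by rw [val_finSucc (by simp only; omega)]; simp only; omega)
  rw [mem_pDes, mem_pDes, key, hδu, hδu']
  simp only [hn, true_and]
  exact ⟨fun h => ⟨by omega, h⟩, And.right⟩

end Blocks

theorem des_sigma_general (n : ℕ) (J : Finset (Fin n))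
    (U : List (Finset (Fin n))) (hU : IsOSP n (compList n J) U)
    (τ σ δU : Equiv.Perm (Fin n))
    (hδU : IsDelta (compList n J) U δU)
    (hσ : IsSigma (compList n J) U τ σ) :
    pDes σ = pDes δU ∪ ((Ustar n U).filter fun u => δU u ∈ pDes τ) := by
  obtain ⟨hc, hdisj, hcov⟩ := hU
  have hblock : ∀ x, ∃ i : Fin U.length, x ∈ U.get i := fun x => by
    obtain ⟨s, hs, hx⟩ := hcov x
    obtain ⟨i, rfl⟩ := List.mem_iff_get.mp hs
    exact ⟨i, hx⟩
  ext u
  rw [mem_union, mem_filter]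
  by_cases hn : (u : ℕ) + 1 < n
  swap
  · simp [mem_pDes, Ustar, hn]
  obtain ⟨i, hi⟩ := hblock u
  obtain ⟨j, hj⟩ := hblock (finSucc u)
  rw [mem_Ustar_iff_s4 hdisj hn hi hj]
  by_cases hij : i = j
  · subst hij
    simp [hσ.mem_pDes_iff hc hδU hn hi hj, hδU.notMem_pDes hn hi hj]
  · simp [hσ.sendsBlocksToIntervals.mem_pDes_iff hδU.sendsBlocksToIntervals hij hi hj, hij]

/-- `Des(σ_U(τ)) = Des(δ_U) ∪ {u ∈ U* : δ_U(u) ∈ Des(τ)}`. -/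
theorem des_sigma (n : ℕ) (J : Finset (Fin n)) (hJ : ∀ i ∈ J, (i : ℕ) + 1 < n)
    (U : List (Finset (Fin n))) (hU : IsOSP n (compList n J) U)
    (τ σ δU : Equiv.Perm (Fin n))
    (hδU : IsDelta (compList n J) U δU)
    (hσ : IsSigma (compList n J) U τ σ) :
    pDes σ = pDes δU ∪ ((Ustar n U).filter fun u => δU u ∈ pDes τ) :=
  des_sigma_general n J U hU τ σ δU hδU hσ
end

section
/- If a multiset B ⊆ S_n is D-symmetric, then B is D-commutative with all inverse J-classes, i.e., for every J ⊆ [n-1] the multisets B·R_J^{-1} and R_J^{-1}·B have equal multisets of descent sets. -/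
open scoped Classical

/-- A multiset `B ⊆ S_n` is `D`-symmetric if for every ordered set partition `U` of
`[n]` (with associated permutation `δ_U`) there is a bijection `Ψ : B → B` such that
for each `u ∈ U*` and `π ∈ B`, `u ∈ Des(π) ⟺ δ_U(u) ∈ Des(Ψ(π))`. -/
def DSymm (n : ℕ) (B : Multiset (Equiv.Perm (Fin n))) : Prop :=
  ∀ U : List (Finset (Fin n)), OSPn n U →
    ∀ δU : Equiv.Perm (Fin n), IsDelta (U.map Finset.card) U δU →
      ∃ Ψ : Equiv.Perm (Fin n) → Equiv.Perm (Fin n), B.map Ψ = B ∧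
        ∀ u ∈ Ustar n U, ∀ π ∈ B, (u ∈ pDes π ↔ δU u ∈ pDes (Ψ π))

/-!
Write `R` for `R_J⁻¹` and colour each position `x` of `σ ∈ R` by the block of `co(J)` that
contains `σ x`; `σ` is increasing on each colour class.

* For `σ ∈ R`, `Des(σ ρ)` is the descent set of the colour word of `σ ρ` with ties broken by
  `Des ρ`. The multiset of colour words of `R` is invariant under permuting positions (it is
  enough to check adjacent transpositions), so over `σ ∈ R` this has the distribution of the
  colour word of `σ` with ties broken by `Des ρ`.
* Over `σ ∈ R`, `Des(π σ)` is distributed as if `π` preserved blocks, i.e. as the colour word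
  of `σ` with ties broken by `σ⁻¹(Des π)`: exchanging values `a, a + 1` of `π` that lie in
  different blocks is matched by a bijection of `R`, and such exchanges sort `π` by blocks.
* For fixed `σ ∈ R`, `σ = δ_U` for the partition `U` of positions by colour, and `U*` is the set
  of positions where the colour does not change; so D-symmetry of `B` turns the ties
  `σ⁻¹(Des π)`, `π ∈ B`, into `Des ρ`, `ρ ∈ B`.

Exchanging the two summations then matches `B · R` with `R · B`.
-/

open Equiv Finset

theorem Multiset.map_eq_map_of_bijOn {α β : Type*} {s : Multiset α} (hs : s.Nodup)
    {Φ : α → α} (hΦ : Set.BijOn Φ {x | x ∈ s} {x | x ∈ s}) {F G : α → β}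
    (h : ∀ x ∈ s, F x = G (Φ x)) : s.map F = s.map G :=
  Multiset.map_eq_map_of_bij_of_nodup F G hs hs (fun x _ => Φ x) (fun _ hx => hΦ.mapsTo hx)
    (fun _ h₁ _ h₂ he => hΦ.injOn h₁ h₂ he)
    (fun _ hy => let ⟨x, hx, e⟩ := hΦ.surjOn hy; ⟨x, hx, e⟩) h

namespace PermDescent

variable {n : ℕ}

theorem finSucc_val {i : Fin n} (h : (i : ℕ) + 1 < n) : (finSucc i : ℕ) = i + 1 :=
  Nat.mod_eq_of_lt h

theorem lt_finSucc {i : Fin n} (h : (i : ℕ) + 1 < n) : i < finSucc i := by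
  rw [Fin.lt_def, finSucc_val h]; omega

theorem mem_pDes {π : Perm (Fin n)} {i : Fin n} :
    i ∈ pDes π ↔ (i : ℕ) + 1 < n ∧ π (finSucc i) < π i := by
  simp [pDes]

theorem monotone_of_le_finSucc {α : Type*} [Preorder α] {f : Fin n → α}
    (h : ∀ i : Fin n, (i : ℕ) + 1 < n → f i ≤ f (finSucc i)) : Monotone f := by
  cases n with
  | zero => exact fun i => i.elim0
  | succ m =>
    refine Fin.monotone_iff_le_succ.2 fun i => ?_
    have hi : (i.castSucc : ℕ) + 1 < m + 1 := by simp
    convert h i.castSucc hi using 2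
    exact Fin.ext (by simp [finSucc_val hi])

theorem strictMono_of_lt_finSucc {α : Type*} [Preorder α] {f : Fin n → α}
    (h : ∀ i : Fin n, (i : ℕ) + 1 < n → f i < f (finSucc i)) : StrictMono f := by
  cases n with
  | zero => exact fun i => i.elim0
  | succ m =>
    refine Fin.strictMono_iff_lt_succ.2 fun i => ?_
    have hi : (i.castSucc : ℕ) + 1 < m + 1 := by simp
    convert h i.castSucc hi using 2
    exact Fin.ext (by simp [finSucc_val hi])

/-- The index of the block of the composition `co(J)` containing the value `v`. -/
def block (J : Finset (Fin n)) (v : Fin n) : ℕ := #{j ∈ J | j < v}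

variable {J : Finset (Fin n)}

theorem block_mono : Monotone (block J) := fun _ _ hvw =>
  card_le_card fun _ => by simp only [mem_filter]; exact fun h => ⟨h.1, h.2.trans_le hvw⟩

theorem block_le_card (v : Fin n) : block J v ≤ #J := card_filter_le _ _

theorem block_finSucc {i : Fin n} (h : (i : ℕ) + 1 < n) :
    block J (finSucc i) = block J i + if i ∈ J then 1 else 0 := by
  have hlt : ∀ j : Fin n, j < finSucc i ↔ j < i ∨ j = i := fun j => by
    rw [Fin.lt_def, Fin.lt_def, finSucc_val h, Fin.ext_iff]; omega
  simp only [block, hlt, filter_or, filter_eq']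
  split_ifs
  · rw [card_union_of_disjoint (by simp)]; rfl
  · simp

theorem swap_lt_swap_iff {z z' : Fin n} (hz : (z : ℕ) + 1 = z') {p q : Fin n}
    (h₁ : ¬(p = z ∧ q = z')) (h₂ : ¬(p = z' ∧ q = z)) : swap z z' p < swap z z' q ↔ p < q := by
  rw [swap_apply_def, swap_apply_def]
  split_ifs <;> simp only [Fin.lt_def, Fin.ext_iff, not_and] at * <;> omega

theorem mem_RinvM {σ : Perm (Fin n)} :
    σ ∈ RinvM n J ↔ ∀ u : Fin n, (u : ℕ) + 1 < n → u ∉ J → σ⁻¹ u < σ⁻¹ (finSucc u) := by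
  change σ ∈ filter _ _ ↔ _
  simp only [mem_filter, mem_univ, true_and, subset_iff, mem_pDes]
  refine forall_congr' fun u => ⟨fun h hu hJ => ?_, fun h ⟨hu, hlt⟩ => ?_⟩
  · refine lt_of_le_of_ne (not_lt.1 fun hlt => hJ (h ⟨hu, hlt⟩)) fun he => ?_
    exact (lt_finSucc hu).ne (σ⁻¹.injective he)
  · by_contra hJ
    exact (h hu hJ).asymm hlt

variable {σ : Perm (Fin n)}

theorem strictMono_toLex_of_mem_RinvM (hσ : σ ∈ RinvM n J) :
    StrictMono fun v => toLex (block J v, σ⁻¹ v) := by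
  refine strictMono_of_lt_finSucc fun u hu => ?_
  rw [Prod.Lex.toLex_lt_toLex, block_finSucc hu]
  by_cases hJ : u ∈ J
  · simp [hJ]
  · simpa [hJ] using mem_RinvM.1 hσ u hu hJ

theorem apply_lt_apply_iff_of_mem_RinvM (hσ : σ ∈ RinvM n J) {x y : Fin n} :
    σ x < σ y ↔ block J (σ x) < block J (σ y) ∨ block J (σ x) = block J (σ y) ∧ x < y := by
  rw [← (strictMono_toLex_of_mem_RinvM hσ).lt_iff_lt, Prod.Lex.toLex_lt_toLex]
  simp

theorem lt_of_apply_lt_of_block_eq (hσ : σ ∈ RinvM n J) {x y : Fin n} (hlt : σ x < σ y)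
    (hb : block J (σ x) = block J (σ y)) : x < y :=
  (((apply_lt_apply_iff_of_mem_RinvM hσ).1 hlt).resolve_left hb.not_lt).2

theorem apply_finSucc_of_block_eq (hσ : σ ∈ RinvM n J) {i : Fin n} (hi : (i : ℕ) + 1 < n)
    (hb : block J (σ (finSucc i)) = block J (σ i)) :
    (σ i : ℕ) + 1 < n ∧ σ (finSucc i) = finSucc (σ i) := by
  have hlt : σ i < σ (finSucc i) :=
    (apply_lt_apply_iff_of_mem_RinvM hσ).2 (Or.inr ⟨hb.symm, lt_finSucc hi⟩)
  rw [Fin.lt_def] at hlt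
  suffices hsucc : (σ (finSucc i) : ℕ) = σ i + 1 by
    have hn : (σ i : ℕ) + 1 < n := hsucc ▸ (σ (finSucc i)).isLt
    exact ⟨hn, Fin.ext (by rw [finSucc_val hn, hsucc])⟩
  by_contra hne
  set v : Fin n := ⟨σ i + 1, by omega⟩
  have h₁ : σ i < σ (σ⁻¹ v) := by simp [v, Fin.lt_def]
  have h₂ : σ (σ⁻¹ v) < σ (finSucc i) := by simp only [Fin.lt_def]; simp [v]; omega
  have hb₁ := block_mono (J := J) h₁.le
  have hb₂ := block_mono (J := J) h₂.le
  have hi₁ := lt_of_apply_lt_of_block_eq hσ h₁ (by omega)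
  have hi₂ := lt_of_apply_lt_of_block_eq hσ h₂ (by omega)
  rw [Fin.lt_def] at hi₁ hi₂
  rw [finSucc_val hi] at hi₂
  omega

theorem mul_swap_mem_RinvM (hσ : σ ∈ RinvM n J) {z z' : Fin n} (hz : (z : ℕ) + 1 = z')
    (hb : block J (σ z) ≠ block J (σ z')) : σ * swap z z' ∈ RinvM n J := by
  refine mem_RinvM.2 fun u hu hJ => ?_
  have hlt := mem_RinvM.1 hσ u hu hJ
  simp only [mul_inv_rev, swap_inv, Perm.mul_apply]
  refine (swap_lt_swap_iff hz ?_ ?_).2 hlt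
  · rintro ⟨rfl, rfl⟩
    apply hb
    simp [block_finSucc hu, hJ]
  · rintro ⟨h₁, h₂⟩
    rw [h₁, h₂, Fin.lt_def] at hlt
    omega

/-- Descents of a coloured word: letters are compared by their colour `f`, and ties between
adjacent letters of equal colour are broken by `S`. -/
def colDes (f : Fin n → ℕ) (S : Finset (Fin n)) : Finset (Fin n) :=
  {i | (i : ℕ) + 1 < n ∧ (f (finSucc i) < f i ∨ f (finSucc i) = f i ∧ i ∈ S)}

theorem mem_colDes {f : Fin n → ℕ} {S : Finset (Fin n)} {i : Fin n} :
    i ∈ colDes f S ↔ (i : ℕ) + 1 < n ∧ (f (finSucc i) < f i ∨ f (finSucc i) = f i ∧ i ∈ S) := by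
  simp [colDes]

theorem colDes_congr {f : Fin n → ℕ} {S T : Finset (Fin n)}
    (h : ∀ i : Fin n, (i : ℕ) + 1 < n → f (finSucc i) = f i → (i ∈ S ↔ i ∈ T)) :
    colDes f S = colDes f T := by
  ext i
  simp only [mem_colDes]
  exact and_congr_right fun hi => or_congr_right <| and_congr_right (h i hi)

theorem pDes_mul_of_mem_RinvM (hσ : σ ∈ RinvM n J) (ρ : Perm (Fin n)) :
    pDes (σ * ρ) = colDes (fun x => block J (σ (ρ x))) (pDes ρ) := by
  ext i
  simp only [mem_pDes, mem_colDes, Perm.mul_apply, apply_lt_apply_iff_of_mem_RinvM hσ]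
  tauto

theorem pDes_mul_of_block_apply_eq {π : Perm (Fin n)} (hπ : ∀ x, block J (π x) = block J x)
    (hσ : σ ∈ RinvM n J) :
    pDes (π * σ) = colDes (fun x => block J (σ x)) {i | σ i ∈ pDes π} := by
  ext i
  simp only [mem_pDes, mem_colDes, mem_filter, mem_univ, true_and, Perm.mul_apply]
  refine and_congr_right fun hi => ?_
  rcases lt_trichotomy (block J (σ (finSucc i))) (block J (σ i)) with hb | hb | hb
  · exact iff_of_true (block_mono.reflect_lt (by rwa [hπ, hπ])) (Or.inl hb)
  · obtain ⟨hn, he⟩ := apply_finSucc_of_block_eq hσ hi hb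
    rw [← he]
    simp [hb, hn]
  · refine iff_of_false (fun hlt => ?_) (by omega)
    have := block_mono (J := J) hlt.le
    rw [hπ, hπ] at this
    omega

theorem nodup_RinvM : (RinvM n J).Nodup := Finset.nodup _

theorem induction_on_mul_swap_finSucc {motive : Perm (Fin n) → Prop} (one : motive 1)
    (mul_swap : ∀ ρ (a : Fin n), (a : ℕ) + 1 < n → motive ρ → motive (ρ * swap a (finSucc a)))
    (ρ : Perm (Fin n)) : motive ρ := by
  cases n with
  | zero => exact Subsingleton.elim 1 ρ ▸ one
  | succ m =>
    refine Submonoid.induction_of_closure_eq_top_right (Perm.mclosure_swap_castSucc_succ m) ρ one ?_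
    rintro ρ _ ⟨i, rfl⟩ hρ
    have hi : (i.castSucc : ℕ) + 1 < m + 1 := by simp
    convert mul_swap ρ i.castSucc hi hρ using 3
    exact Fin.ext (by simp [finSucc_val hi])

theorem map_block_comp_mul_swap {a a' : Fin n} (ha : (a : ℕ) + 1 = a') :
    (RinvM n J).map (fun σ x => block J ((σ * swap a a') x)) =
      (RinvM n J).map (fun σ x => block J (σ x)) := by
  set Φ : Perm (Fin n) → Perm (Fin n) := fun σ =>
    if block J (σ a) = block J (σ a') then σ else σ * swap a a'
  have hmaps : Set.MapsTo Φ {σ | σ ∈ RinvM n J} {σ | σ ∈ RinvM n J} := fun σ hσ => by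
    by_cases hb : block J (σ a) = block J (σ a')
    · simpa [Φ, hb] using hσ
    · simpa [Φ, hb] using mul_swap_mem_RinvM hσ ha hb
  have hinv : ∀ σ, Φ (Φ σ) = σ := fun σ => by
    by_cases hb : block J (σ a) = block J (σ a')
    · simp [Φ, hb]
    · simp [Φ, hb, Ne.symm hb, mul_assoc]
  refine Multiset.map_eq_map_of_bijOn nodup_RinvM
    (Set.InvOn.bijOn ⟨fun σ _ => hinv σ, fun σ _ => hinv σ⟩ hmaps hmaps) fun σ _ => ?_
  by_cases hb : block J (σ a) = block J (σ a')
  · funext x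
    simp only [Φ, hb, if_true, Perm.mul_apply, swap_apply_def]
    split_ifs with h₁ h₂ <;> simp_all
  · simp [Φ, hb]

theorem map_block_comp_mul (ρ : Perm (Fin n)) :
    (RinvM n J).map (fun σ x => block J ((σ * ρ) x)) =
      (RinvM n J).map (fun σ x => block J (σ x)) := by
  induction ρ using induction_on_mul_swap_finSucc with
  | one => simp
  | mul_swap ρ a ha ih =>
    calc (RinvM n J).map (fun σ x => block J ((σ * (ρ * swap a (finSucc a))) x))
        = ((RinvM n J).map fun σ x => block J ((σ * ρ) x)).map (· ∘ swap a (finSucc a)) := by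
          simp only [Multiset.map_map]; rfl
      _ = (RinvM n J).map (fun σ x => block J ((σ * swap a (finSucc a)) x)) := by
          rw [ih, Multiset.map_map]; rfl
      _ = (RinvM n J).map (fun σ x => block J (σ x)) :=
          map_block_comp_mul_swap (finSucc_val ha).symm

theorem map_pDes_RinvM_mul (ρ : Perm (Fin n)) :
    (RinvM n J).map (fun σ => pDes (σ * ρ)) =
      (RinvM n J).map (fun σ => colDes (fun x => block J (σ x)) (pDes ρ)) := by
  calc (RinvM n J).map (fun σ => pDes (σ * ρ))
      = ((RinvM n J).map fun σ x => block J ((σ * ρ) x)).map (colDes · (pDes ρ)) := by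
        rw [Multiset.map_map]
        exact Multiset.map_congr rfl fun σ hσ => pDes_mul_of_mem_RinvM hσ ρ
    _ = _ := by rw [map_block_comp_mul, Multiset.map_map]; rfl

theorem mem_pDes_swap_mul_iff {a a' : Fin n} (ha : (a : ℕ) + 1 = a') {τ : Perm (Fin n)}
    {i : Fin n} (h : (i : ℕ) + 1 < n →
      ¬(τ i = a ∧ τ (finSucc i) = a') ∧ ¬(τ i = a' ∧ τ (finSucc i) = a)) :
    i ∈ pDes (swap a a' * τ) ↔ i ∈ pDes τ := by
  simp only [mem_pDes, Perm.mul_apply]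
  exact and_congr_right fun hi => swap_lt_swap_iff ha (by tauto) (by tauto)

theorem mem_pDes_swap_mul_of_block_eq {a a' : Fin n} (ha : (a : ℕ) + 1 = a') {π : Perm (Fin n)}
    (hd : block J (π⁻¹ a) ≠ block J (π⁻¹ a')) {p : Fin n} (hb : block J (finSucc p) = block J p) :
    p ∈ pDes (swap a a' * π) ↔ p ∈ pDes π := by
  refine mem_pDes_swap_mul_iff ha fun _ => ⟨?_, ?_⟩ <;> rintro ⟨h₁, h₂⟩ <;> apply hd
  · rw [← h₁, ← h₂]; simp [hb]
  · rw [← h₁, ← h₂]; simp [hb]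

/-- When `a, a'` sit at adjacent positions of `π * σ`, exchanging these positions in `σ` undoes
the exchange of the values `a, a'` in `π`; otherwise that exchange does not move descents. -/
noncomputable def shuffleSwap (π : Perm (Fin n)) (a a' : Fin n) (σ : Perm (Fin n)) :
    Perm (Fin n) :=
  let p := (π * σ)⁻¹ a
  let q := (π * σ)⁻¹ a'
  if (p : ℕ) + 1 = q ∨ (q : ℕ) + 1 = p then σ * swap p q else σ

theorem swap_mul_mul_swap_inv_apply (τ : Perm (Fin n)) (a a' : Fin n) :
    swap a a' * τ * swap (τ⁻¹ a) (τ⁻¹ a') = τ := by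
  have h := swap_apply_apply τ (τ⁻¹ a) (τ⁻¹ a')
  simp only [Perm.coe_inv, apply_symm_apply] at h
  rw [h]
  simp [mul_assoc]

theorem shuffleSwap_mem_RinvM {π : Perm (Fin n)} {a a' : Fin n} (hσ : σ ∈ RinvM n J)
    (hd : block J (π⁻¹ a) ≠ block J (π⁻¹ a')) :
    shuffleSwap π a a' σ ∈ RinvM n J := by
  have hp : σ ((π * σ)⁻¹ a) = π⁻¹ a := by simp [mul_inv_rev]
  have hq : σ ((π * σ)⁻¹ a') = π⁻¹ a' := by simp [mul_inv_rev]
  dsimp only [shuffleSwap]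
  split_ifs with hadj
  · rcases hadj with h | h
    · exact mul_swap_mem_RinvM hσ h (by rwa [hp, hq])
    · rw [swap_comm]
      exact mul_swap_mem_RinvM hσ h (by rwa [hp, hq, ne_comm])
  · exact hσ

theorem pDes_swap_mul_mul_shuffleSwap {a a' : Fin n} (ha : (a : ℕ) + 1 = a')
    (π σ : Perm (Fin n)) :
    pDes (swap a a' * π * shuffleSwap π a a' σ) = pDes (π * σ) := by
  dsimp only [shuffleSwap]
  split_ifs with hadj
  · rw [← mul_assoc, mul_assoc (swap a a') π σ, swap_mul_mul_swap_inv_apply]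
  · rw [mul_assoc]
    ext i
    refine mem_pDes_swap_mul_iff ha fun hi => ⟨?_, ?_⟩ <;> rintro ⟨h₁, h₂⟩ <;> apply hadj
    · left; rw [← h₁, ← h₂]; simp [finSucc_val hi]
    · right; rw [← h₁, ← h₂]; simp [finSucc_val hi]

theorem shuffleSwap_swap_mul_shuffleSwap (π σ : Perm (Fin n)) (a a' : Fin n) :
    shuffleSwap (swap a a' * π) a a' (shuffleSwap π a a' σ) = σ := by
  by_cases hadj : (((π * σ)⁻¹ a : Fin n) : ℕ) + 1 = (π * σ)⁻¹ a' ∨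
      (((π * σ)⁻¹ a' : Fin n) : ℕ) + 1 = (π * σ)⁻¹ a
  · have hτ : swap a a' * π * (σ * swap ((π * σ)⁻¹ a) ((π * σ)⁻¹ a')) = π * σ := by
      rw [← mul_assoc, mul_assoc (swap a a') π σ, swap_mul_mul_swap_inv_apply]
    simp only [shuffleSwap, if_pos hadj, hτ]
    simp [mul_assoc]
  · have hτ : swap a a' * π * σ = swap a a' * (π * σ) := mul_assoc _ _ _
    simp only [shuffleSwap, if_neg hadj, hτ]
    simp only [mul_inv_rev, swap_inv, Perm.mul_apply, swap_apply_left, swap_apply_right]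
    rw [if_neg (by simpa [or_comm] using hadj)]

theorem map_pDes_swap_mul_mul_RinvM {π : Perm (Fin n)} {a a' : Fin n} (ha : (a : ℕ) + 1 = a')
    (hd : block J (π⁻¹ a) ≠ block J (π⁻¹ a')) :
    (RinvM n J).map (fun σ => pDes (swap a a' * π * σ)) =
      (RinvM n J).map (fun σ => pDes (π * σ)) := by
  have hd' : block J ((swap a a' * π)⁻¹ a) ≠ block J ((swap a a' * π)⁻¹ a') := by
    simpa [mul_inv_rev] using hd.symm
  have hright : ∀ σ, shuffleSwap π a a' (shuffleSwap (swap a a' * π) a a' σ) = σ := fun σ => by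
    simpa [swap_mul_self_mul] using shuffleSwap_swap_mul_shuffleSwap (swap a a' * π) σ a a'
  refine (Multiset.map_eq_map_of_bijOn nodup_RinvM (Set.InvOn.bijOn
    ⟨fun σ _ => shuffleSwap_swap_mul_shuffleSwap π σ a a', fun σ _ => hright σ⟩
    (fun σ hσ => shuffleSwap_mem_RinvM hσ hd) (fun σ hσ => shuffleSwap_mem_RinvM hσ hd'))
    fun σ _ => (pDes_swap_mul_mul_shuffleSwap ha π σ).symm).symm

theorem toLex_block_inv_swap_mul_lt {π : Perm (Fin n)} {a : Fin n} (ha : (a : ℕ) + 1 < n)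
    (hlt : block J (π⁻¹ (finSucc a)) < block J (π⁻¹ a)) :
    toLex (fun v => block J ((swap a (finSucc a) * π)⁻¹ v)) < toLex fun v => block J (π⁻¹ v) := by
  have hne : ∀ v < a, v ≠ finSucc a := fun v hv => (hv.trans (lt_finSucc ha)).ne
  refine ⟨a, fun v hv => ?_, ?_⟩
  · simp [mul_inv_rev, swap_apply_of_ne_of_ne hv.ne (hne v hv)]
  · simpa [mul_inv_rev] using hlt

theorem block_apply_eq_of_monotone {π : Perm (Fin n)} (h : Monotone fun v => block J (π⁻¹ v))
    (x : Fin n) : block J (π x) = block J x := by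
  have := congrFun (Tuple.unique_monotone (f := block J) (σ := π⁻¹) (τ := 1) h block_mono) (π x)
  simpa using this.symm

theorem map_pDes_mul_RinvM (π : Perm (Fin n)) :
    (RinvM n J).map (fun σ => pDes (π * σ)) =
      (RinvM n J).map (fun σ => colDes (fun x => block J (σ x)) {i | σ i ∈ pDes π}) := by
  induction π using (InvImage.wf (fun π : Perm (Fin n) => toLex fun v => block J (π⁻¹ v))
      wellFounded_lt).induction with
  | _ π ih =>
    by_cases hunsorted :
        ∃ a : Fin n, (a : ℕ) + 1 < n ∧ block J (π⁻¹ (finSucc a)) < block J (π⁻¹ a)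
    · obtain ⟨a, ha, hlt⟩ := hunsorted
      have hd : block J (π⁻¹ a) ≠ block J (π⁻¹ (finSucc a)) := hlt.ne'
      rw [← map_pDes_swap_mul_mul_RinvM (finSucc_val ha).symm hd,
        ih _ (toLex_block_inv_swap_mul_lt ha hlt)]
      refine Multiset.map_congr rfl fun σ hσ => colDes_congr fun i hi hb => ?_
      obtain ⟨-, he⟩ := apply_finSucc_of_block_eq hσ hi hb
      simp only [mem_filter, mem_univ, true_and]
      exact mem_pDes_swap_mul_of_block_eq (finSucc_val ha).symm hd (he ▸ hb)
    · push Not at hunsorted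
      have hblock := block_apply_eq_of_monotone (monotone_of_le_finSucc hunsorted)
      exact Multiset.map_congr rfl fun σ hσ => pDes_mul_of_block_apply_eq hblock hσ

theorem exists_block_eq (hn : 0 < n) (hJ : ∀ i ∈ J, (i : ℕ) + 1 < n) {t : ℕ} (ht : t ≤ #J) :
    ∃ v : Fin n, block J v = t := by
  -- `block J` rises from `0` to `#J` in steps of at most one; take the first `v` reaching `t`.
  have hlast : block J ⟨n - 1, by omega⟩ = #J := by
    rw [block, filter_true_of_mem fun j hj => ?_]
    have := hJ j hj
    rw [Fin.lt_def]; simp only; omega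
  set S : Finset (Fin n) := {v | t ≤ block J v}
  have hne : S.Nonempty := ⟨⟨n - 1, by omega⟩, by simpa [S, hlast] using ht⟩
  set v := S.min' hne
  have hv : t ≤ block J v := by simpa [S] using S.min'_mem hne
  refine ⟨v, le_antisymm ?_ hv⟩
  rcases Nat.eq_zero_or_pos (v : ℕ) with h0 | hpos
  · have : block J v = 0 := card_eq_zero.2 <| filter_eq_empty_iff.2 fun j _ => by
      rw [Fin.lt_def, h0]; omega
    omega
  · set u : Fin n := ⟨v - 1, by omega⟩
    have hu : (u : ℕ) + 1 < n := by simp only [u]; omega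
    have hvu : finSucc u = v := Fin.ext (by rw [finSucc_val hu]; simp only [u]; omega)
    have hut : block J u < t := by
      by_contra hle
      have := S.min'_le u (by simpa [S] using not_lt.1 hle)
      rw [Fin.le_def] at this; simp only [u] at this; omega
    have := block_finSucc (J := J) hu
    rw [hvu] at this
    split_ifs at this <;> omega

/-- The partition `U` of the positions of `σ` by the block of their value; for `σ ∈ R_J⁻¹`
it has `δ_U = σ`. -/
def blockPartition (J : Finset (Fin n)) (σ : Perm (Fin n)) : List (Finset (Fin n)) :=
  (List.range (#J + 1)).map fun t => ({x | block J (σ x) = t} : Finset (Fin n))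

theorem mem_blockPartition {s : Finset (Fin n)} :
    s ∈ blockPartition J σ ↔ ∃ t ≤ #J, ({x | block J (σ x) = t} : Finset (Fin n)) = s := by
  simp [blockPartition]

theorem fiber_mem_blockPartition (x : Fin n) :
    ({y | block J (σ y) = block J (σ x)} : Finset (Fin n)) ∈ blockPartition J σ :=
  mem_blockPartition.2 ⟨_, block_le_card _, rfl⟩

theorem blockPartition_OSPn (hn : 0 < n) (hJ : ∀ i ∈ J, (i : ℕ) + 1 < n) (σ : Perm (Fin n)) :
    OSPn n (blockPartition J σ) := by
  refine ⟨?_, ?_, fun x => ⟨_, fiber_mem_blockPartition x, by simp⟩⟩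
  · refine List.pairwise_map.2 (List.nodup_range.imp fun hne => ?_)
    exact disjoint_filter.2 fun _ _ h₁ h₂ => hne (h₁.symm.trans h₂)
  · intro s hs
    obtain ⟨t, ht, rfl⟩ := mem_blockPartition.1 hs
    obtain ⟨v, hv⟩ := exists_block_eq hn hJ ht
    exact ⟨σ⁻¹ v, by simp [hv]⟩

theorem sum_take_map_card_blockPartition (σ : Perm (Fin n)) {i : ℕ} (hi : i ≤ #J + 1) :
    (((blockPartition J σ).map card).take i).sum = #{v : Fin n | block J v < i} := by
  rw [blockPartition, List.map_map, ← List.map_take, List.take_range, min_eq_left hi]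
  calc ((List.range i).map _).sum
      = ∑ t ∈ range i, #{x | block J (σ x) = t} := by
        rw [sum_eq_multiset_sum, range_val, Multiset.range, Multiset.map_coe, Multiset.sum_coe]
        rfl
    _ = #{x | block J (σ x) < i} := by
        rw [card_eq_sum_card_fiberwise (f := fun x => block J (σ x)) (t := range i)
          fun x hx => by simpa using hx]
        refine sum_congr rfl fun t ht => congrArg card ?_
        ext x
        simp only [mem_filter, mem_univ, true_and, iff_and_self]
        exact fun h => h ▸ mem_range.1 ht
    _ = #{v : Fin n | block J v < i} := card_equiv σ fun x => by simp

theorem isDelta_blockPartition (hσ : σ ∈ RinvM n J) :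
    IsDelta ((blockPartition J σ).map card) (blockPartition J σ) σ := by
  intro i hi
  have hi' : i < #J + 1 := by simpa [blockPartition] using hi
  have hget : (blockPartition J σ).get ⟨i, hi⟩ = ({x | block J (σ x) = i} : Finset (Fin n)) := by
    simp [blockPartition]
  rw [hget]
  simp only [mem_filter, mem_univ, true_and]
  refine ⟨fun x hx y hy hxy => ?_, fun x hx => ?_⟩
  · exact (apply_lt_apply_iff_of_mem_RinvM hσ).2 (Or.inr ⟨hx.trans hy.symm, hxy⟩)
  · rw [sum_take_map_card_blockPartition σ hi'.le, sum_take_map_card_blockPartition σ hi',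
      ← not_lt, Tuple.lt_card_lt_iff_apply_lt_of_monotone block_mono,
      Tuple.lt_card_lt_iff_apply_lt_of_monotone block_mono]
    omega

theorem mem_Ustar_blockPartition {u : Fin n} :
    u ∈ Ustar n (blockPartition J σ) ↔
      (u : ℕ) + 1 < n ∧ block J (σ (finSucc u)) = block J (σ u) := by
  simp only [Ustar, mem_filter, mem_univ, true_and]
  refine and_congr_right fun _ => ⟨?_, fun hb => ⟨_, fiber_mem_blockPartition u, by simp, ?_⟩⟩
  · rintro ⟨s, hs, hu, hsu⟩
    obtain ⟨t, -, rfl⟩ := mem_blockPartition.1 hs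
    simp only [mem_filter, mem_univ, true_and] at hu hsu
    rw [hu, hsu]
  · simpa using hb

theorem map_colDes_of_dSymm {B : Multiset (Perm (Fin n))} (hB : DSymm n B)
    (hJ : ∀ i ∈ J, (i : ℕ) + 1 < n) (hσ : σ ∈ RinvM n J) :
    B.map (fun π => colDes (fun x => block J (σ x)) {i | σ i ∈ pDes π}) =
      B.map (fun ρ => colDes (fun x => block J (σ x)) (pDes ρ)) := by
  rcases Nat.eq_zero_or_pos n with rfl | hn
  · exact Multiset.map_congr rfl fun _ _ => Subsingleton.elim _ _
  obtain ⟨Ψ, hΨB, hΨ⟩ :=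
    hB _ (blockPartition_OSPn hn hJ σ) σ (isDelta_blockPartition hσ)
  conv_lhs => rw [← hΨB, Multiset.map_map]
  refine Multiset.map_congr rfl fun ρ hρ => ?_
  rw [Function.comp_apply]
  refine colDes_congr fun i hi hb => ?_
  simpa using (hΨ i (mem_Ustar_blockPartition.2 ⟨hi, hb⟩) ρ hρ).symm

theorem map_pDes_mprod (A C : Multiset (Perm (Fin n))) :
    (mprod A C).map pDes = A.bind fun a => C.map fun c => pDes (a * c) := by
  simp only [mprod, Multiset.map_bind, Multiset.map_map, Function.comp_def]

end PermDescent

open PermDescent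

/-- A `D`-symmetric multiset is `D`-commutative with all inverse
`J`-classes: `B·R_J⁻¹ ≡ R_J⁻¹·B` for every `J ⊆ [n-1]`. -/
theorem dsymm_commutes (n : ℕ) (B : Multiset (Equiv.Perm (Fin n))) (hB : DSymm n B)
    (J : Finset (Fin n)) (hJ : ∀ i ∈ J, (i : ℕ) + 1 < n) :
    (mprod B (RinvM n J)).map pDes = (mprod (RinvM n J) B).map pDes := by
  let colour (σ : Equiv.Perm (Fin n)) (S : Finset (Fin n)) := colDes (fun x => block J (σ x)) S
  calc (mprod B (RinvM n J)).map pDes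
      = B.bind fun π => (RinvM n J).map fun σ => colour σ {i | σ i ∈ pDes π} := by
        rw [map_pDes_mprod]
        exact Multiset.bind_congr fun π _ => map_pDes_mul_RinvM π
    _ = (RinvM n J).bind fun σ => B.map fun π => colour σ {i | σ i ∈ pDes π} :=
        Multiset.bind_map_comm _ _
    _ = (RinvM n J).bind fun σ => B.map fun ρ => colour σ (pDes ρ) :=
        Multiset.bind_congr fun σ hσ => map_colDes_of_dSymm hB hJ hσ
    _ = B.bind fun ρ => (RinvM n J).map fun σ => colour σ (pDes ρ) :=
        (Multiset.bind_map_comm _ _).symm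
    _ = B.bind fun ρ => (RinvM n J).map fun σ => pDes (σ * ρ) :=
        Multiset.bind_congr fun ρ _ => (map_pDes_RinvM_mul ρ).symm
    _ = (mprod (RinvM n J) B).map pDes := by
        rw [map_pDes_mprod, Multiset.bind_map_comm]
end

section
/- Every conjugacy class C of the symmetric group S_n is a symmetric set, i.e., Q(C) = Σ_{π∈C} F_{Des(π),n} is a symmetric function. -/
open scoped Classical

/-- Gessel's fundamental quasisymmetric function `F_{J,n}` in variables `x_0, x_1, …`,
as a formal power series: the coefficient of a monomial with exponent vector `d` is the
number of weakly increasing maps `f : Fin n → ℕ`, strict at each position of `J`,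
whose fibers have the sizes prescribed by `d`. -/
noncomputable def FQ (n : ℕ) (J : Finset (Fin n)) : MvPowerSeries ℕ ℚ :=
  fun d => (Nat.card {f : Fin n → ℕ //
      (∀ i j : Fin n, i ≤ j → f i ≤ f j) ∧
      (∀ i : Fin n, (i : ℕ) + 1 < n → i ∈ J → f i < f (finSucc i)) ∧
      (∀ k : ℕ, (Finset.univ.filter fun i => f i = k).card = d k)} : ℚ)

/-- `Q(B) = Σ_{π ∈ B} F_{Des(π),n}`. -/
noncomputable def QB (n : ℕ) (B : Multiset (Equiv.Perm (Fin n))) : MvPowerSeries ℕ ℚ :=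
  (B.map fun π => FQ n (pDes π)).sum

/-- A power series in the variables `x_0, x_1, …` is symmetric if it is invariant
under every permutation of the variables. -/
def IsSymmPS (F : MvPowerSeries ℕ ℚ) : Prop :=
  ∀ (e : Equiv.Perm ℕ) (d : ℕ →₀ ℕ),
    MvPowerSeries.coeff (R := ℚ) (Finsupp.equivMapDomain e d) F = MvPowerSeries.coeff (R := ℚ) d F

/-!
The coefficient of `x^d` in `Q(C)` counts pairs `(σ, f)` with `σ ∈ C` and `f` a filling of
`Des σ` of content `d`. Reading `f` through `σ⁻¹` identifies these pairs with words `w` of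
content `d` whose sorting permutation `Tuple.sort w` (ties broken by position) lies in `C`.

Following Gessel and Reutenauer, read `w` along the cycles of `Tuple.sort w`: this gives a
multiset of primitive necklaces, one per cycle, and the word is recovered from it by sorting
positions by the infinite word read from their successor. Relabelling the letters by a
bijection `e` of `ℕ` keeps the necklaces primitive and their lengths unchanged, so
relabelling followed by this reconstruction is a bijection from words of content `d` to words
of content `d ∘ e⁻¹` that keeps the sorting permutation in its conjugacy class.
-/

open Equiv Finset

namespace GesselReutenauer

variable {n : ℕ} {α β : Type*}

def orbitWord (σ : Perm (Fin n)) (w : Fin n → α) (a : Fin n) : ℕ → α :=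
  fun t => w ((σ ^ t) a)

lemma orbitWord_succ (σ : Perm (Fin n)) (w : Fin n → α) (a : Fin n) (t : ℕ) :
    orbitWord σ w a (t + 1) = orbitWord σ w (σ a) t := by
  simp only [orbitWord, pow_succ, Perm.mul_apply]

lemma orbitWord_apply (σ : Perm (Fin n)) (w : Fin n → α) (a : Fin n) :
    orbitWord σ w (σ a) = fun t => orbitWord σ w a (t + 1) :=
  funext fun t => (orbitWord_succ σ w a t).symm

lemma orbitWord_conj (σ ρ : Perm (Fin n)) (w : Fin n → α) (a : Fin n) :
    orbitWord (ρ⁻¹ * σ * ρ) (w ∘ ρ) a = orbitWord σ w (ρ a) := by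
  funext t
  have hpow : (ρ⁻¹ * σ * ρ) ^ t = ρ⁻¹ * σ ^ t * ρ := by
    simpa using conj_pow (a := ρ⁻¹) (b := σ) (i := t)
  simp [orbitWord, hpow]

/-- The orbit of `σ x` returns to `x`. -/
lemma eq_of_orbitWord_apply_eq (σ : Perm (Fin n)) (w : Fin n → α) {x y : Fin n}
    (h : orbitWord σ w (σ x) = orbitWord σ w (σ y)) : w x = w y := by
  have hback : ∀ z : Fin n, (σ ^ (orderOf σ - 1)) (σ z) = z := fun z => by
    rw [← Perm.mul_apply, ← pow_succ, Nat.sub_add_cancel (orderOf_pos σ),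
      pow_orderOf_eq_one, Perm.one_apply]
  have := congrFun h (orderOf σ - 1)
  rwa [orbitWord, orbitWord, hback, hback] at this

/-- The necklaces read off the cycles of `σ` are primitive. -/
def Aperiodic (σ : Perm (Fin n)) (w : Fin n → α) : Prop :=
  ∀ a t, orbitWord σ w ((σ ^ t) a) = orbitWord σ w a → (σ ^ t) a = a

lemma Aperiodic.comp {σ : Perm (Fin n)} {w : Fin n → α} (hw : Aperiodic σ w) {E : α → β}
    (hE : Function.Injective E) : Aperiodic σ (E ∘ w) :=
  fun a t h => hw a t (funext fun s => hE (congrFun h s))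

noncomputable def cycleMin (σ : Perm (Fin n)) (i : Fin n) : Fin n :=
  (univ.filter (σ.SameCycle i)).min' ⟨i, mem_filter.2 ⟨mem_univ i, .refl σ i⟩⟩

lemma sameCycle_cycleMin (σ : Perm (Fin n)) (i : Fin n) : σ.SameCycle i (cycleMin σ i) :=
  (mem_filter.1 (min'_mem _ _)).2

lemma cycleMin_le {σ : Perm (Fin n)} {i j : Fin n} (h : σ.SameCycle i j) : cycleMin σ i ≤ j :=
  min'_le _ _ (by simpa using h)

lemma cycleMin_eq_of_sameCycle {σ : Perm (Fin n)} {i j : Fin n} (h : σ.SameCycle i j) :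
    cycleMin σ i = cycleMin σ j := by
  simp only [cycleMin]
  congr 1
  ext k
  simpa using ⟨h.symm.trans, h.trans⟩

lemma sameCycle_of_cycleMin_eq {σ : Perm (Fin n)} {i j : Fin n}
    (h : cycleMin σ i = cycleMin σ j) : σ.SameCycle i j :=
  (sameCycle_cycleMin σ i).trans (h ▸ sameCycle_cycleMin σ j).symm

lemma cycleMin_apply (σ : Perm (Fin n)) (i : Fin n) : cycleMin σ (σ i) = cycleMin σ i :=
  cycleMin_eq_of_sameCycle (Perm.sameCycle_apply_left.2 (Perm.SameCycle.refl σ i))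

noncomputable def necklaceKey (σ : Perm (Fin n)) (u : Fin n → α) (i : Fin n) :
    Lex (ℕ → α) ×ₗ Fin n :=
  toLex (toLex (orbitWord σ u (σ i)), cycleMin σ i)

lemma necklaceKey_injective {σ : Perm (Fin n)} {u : Fin n → α} (hu : Aperiodic σ u) :
    Function.Injective (necklaceKey σ u) := by
  intro x y h
  simp only [necklaceKey, toLex_inj, Prod.mk.injEq] at h
  obtain ⟨hword, hcyc⟩ := h
  obtain ⟨t, -, ht⟩ :=
    (Perm.sameCycle_apply_left.2 (Perm.sameCycle_apply_right.2 (sameCycle_of_cycleMin_eq hcyc)))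
      |>.exists_pow_eq'
  have hfix : (σ ^ t) (σ x) = σ x := hu _ t (by rw [ht, hword])
  exact σ.injective (by rw [← hfix, ht])

variable [LinearOrder α] [LinearOrder β]

lemma toLex_lt_of_necklaceKey_lt {σ : Perm (Fin n)} {u : Fin n → α} {i j : Fin n}
    (h : necklaceKey σ u i < necklaceKey σ u j) :
    toLex (u (σ i), necklaceKey σ u (σ i)) < toLex (u (σ j), necklaceKey σ u (σ j)) := by
  simp only [necklaceKey, Prod.Lex.toLex_lt_toLex] at h ⊢
  rcases h with ⟨_ | t, hpre, ht⟩ | ⟨hword, hcyc⟩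
  · exact Or.inl (by simpa [orbitWord] using ht)
  · refine Or.inr ⟨by simpa [orbitWord] using hpre 0 t.succ_pos, Or.inl ⟨t, fun s hs => ?_, ?_⟩⟩
    · simpa only [Pi.toLex_apply, orbitWord_succ] using hpre (s + 1) (by omega)
    · simpa only [Pi.toLex_apply, orbitWord_succ] using ht
  · have hword' := toLex_inj.1 hword
    refine Or.inr ⟨by simpa [orbitWord] using congrFun hword' 0, Or.inr ⟨?_, ?_⟩⟩
    · rw [orbitWord_apply, orbitWord_apply σ u (σ j), hword']
    · rwa [cycleMin_apply, cycleMin_apply]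

lemma eq_sort_iff_strictMono (w : Fin n → α) (σ : Perm (Fin n)) :
    σ = Tuple.sort w ↔ StrictMono fun i => toLex (w (σ i), σ i) :=
  Tuple.eq_sort_iff'

lemma sort_lt_sort_of_eq (w : Fin n → α) {i j : Fin n} (hij : i < j)
    (h : w (Tuple.sort w i) = w (Tuple.sort w j)) : Tuple.sort w i < Tuple.sort w j :=
  (Tuple.eq_sort_iff.1 rfl).2 i j hij h

lemma sort_pow_lt_sort_pow (w : Fin n → α) {t : ℕ} :
    ∀ {a b : Fin n}, a < b →
      (∀ s < t, orbitWord (Tuple.sort w) w (Tuple.sort w a) s =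
        orbitWord (Tuple.sort w) w (Tuple.sort w b) s) →
      (Tuple.sort w ^ t) a < (Tuple.sort w ^ t) b := by
  induction t with
  | zero => intro a b hab _; simpa using hab
  | succ t ih =>
    intro a b hab h
    have hσ : Tuple.sort w a < Tuple.sort w b :=
      sort_lt_sort_of_eq w hab (by simpa [orbitWord] using h 0 t.succ_pos)
    simp only [pow_succ, Perm.mul_apply]
    refine ih hσ fun s hs => ?_
    simpa only [orbitWord_succ] using h (s + 1) (by omega)

/-- If the orbit word from `b = σᵗ a` equals the one from `a`, then `u ↦ σ^{ut} a` is strictly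
monotone or antitone, impossible in the finite type `Fin n` unless `b = a`. -/
lemma aperiodic_sort (w : Fin n → α) : Aperiodic (Tuple.sort w) w := by
  set σ := Tuple.sort w
  intro a t h
  by_contra hne
  have hstep : ∀ x y : Fin n, x < y → orbitWord σ w x = orbitWord σ w y →
      ∀ u, (σ ^ u) x < (σ ^ u) y := fun x y hxy hw u =>
    sort_pow_lt_sort_pow w hxy fun s _ => by rw [orbitWord_apply, orbitWord_apply, hw]
  have hnext : ∀ u, (σ ^ ((u + 1) * t)) a = (σ ^ (u * t)) ((σ ^ t) a) := fun u => by
    rw [add_mul, one_mul, pow_add, Perm.mul_apply]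
  have hinj : Function.Injective fun u : ℕ => (σ ^ (u * t)) a := by
    rcases lt_or_gt_of_ne hne with hlt | hlt
    · exact (strictAnti_nat_of_succ_lt fun u =>
        (hnext u).symm ▸ hstep _ _ hlt h (u * t)).injective
    · exact (strictMono_nat_of_lt_succ fun u =>
        (hnext u).symm ▸ hstep _ _ hlt h.symm (u * t)).injective
  exact not_injective_infinite_finite _ hinj

lemma strictMono_necklaceKey_sort (w : Fin n → α) :
    StrictMono (necklaceKey (Tuple.sort w) w) := by
  set σ := Tuple.sort w
  intro x y hxy
  simp only [necklaceKey, Prod.Lex.toLex_lt_toLex]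
  rcases lt_trichotomy (toLex (orbitWord σ w (σ x))) (toLex (orbitWord σ w (σ y)))
    with hlt | heq | ⟨t, hpre, ht⟩
  · exact Or.inl hlt
  · refine Or.inr ⟨heq, ?_⟩
    obtain ⟨t, -, ht⟩ := (sameCycle_cycleMin σ y).exists_pow_eq'
    calc cycleMin σ x ≤ (σ ^ t) x := cycleMin_le ⟨t, rfl⟩
      _ < (σ ^ t) y := sort_pow_lt_sort_pow w hxy fun s _ => by rw [toLex_inj.1 heq]
      _ = cycleMin σ y := ht
  · exfalso
    have hpow : (σ ^ t) x < (σ ^ t) y :=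
      sort_pow_lt_sort_pow w hxy fun s hs => (hpre s hs).symm
    have hle := Tuple.monotone_sort w hpow.le
    simp only [Pi.toLex_apply, orbitWord, ← Perm.mul_apply, ← pow_succ, pow_succ'] at ht
    exact hle.not_gt ht

lemma sort_comp_sort_eq_conj {γ : Type*} [LinearOrder γ] (v : Fin n → α) (τ : Perm (Fin n))
    {K : Fin n → γ} (hK : Function.Injective K)
    (hτ : ∀ i j, K i < K j → toLex (v (τ i), K (τ i)) < toLex (v (τ j), K (τ j))) :
    Tuple.sort (v ∘ Tuple.sort K) = (Tuple.sort K)⁻¹ * τ * Tuple.sort K := by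
  set S := Tuple.sort K
  have hS : StrictMono (K ∘ S) :=
    (Tuple.monotone_sort K).strictMono_of_injective (hK.comp S.injective)
  have hrank : ∀ x y, K x < K y ↔ S⁻¹ x < S⁻¹ y := fun x y => by
    simpa using hS.lt_iff_lt (a := S⁻¹ x) (b := S⁻¹ y)
  refine ((eq_sort_iff_strictMono _ _).2 fun r s hrs => ?_).symm
  have := hτ _ _ (hS hrs)
  simp only [Prod.Lex.toLex_lt_toLex, hrank] at this
  simpa [Perm.mul_apply, Prod.Lex.toLex_lt_toLex] using this

noncomputable def relabelPerm (E : α ≃ β) (w : Fin n → α) : Perm (Fin n) :=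
  Tuple.sort (necklaceKey (Tuple.sort w) (E ∘ w))

/-- Relabel the letters by `E`, then rearrange the positions so that each cycle of the new
sorting permutation carries the relabelled necklace of a cycle of the old one. -/
noncomputable def relabel (E : α ≃ β) (w : Fin n → α) : Fin n → β :=
  (E ∘ w) ∘ relabelPerm E w

lemma sort_relabel (E : α ≃ β) (w : Fin n → α) :
    Tuple.sort (relabel E w) = (relabelPerm E w)⁻¹ * Tuple.sort w * relabelPerm E w :=
  sort_comp_sort_eq_conj _ _ (necklaceKey_injective ((aperiodic_sort w).comp E.injective))
    fun _ _ => toLex_lt_of_necklaceKey_lt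

lemma isConj_sort_relabel (E : α ≃ β) (w : Fin n → α) :
    IsConj (Tuple.sort w) (Tuple.sort (relabel E w)) := by
  rw [sort_relabel]
  exact isConj_iff.2 ⟨(relabelPerm E w)⁻¹, by rw [inv_inv]⟩

lemma card_relabel_eq (E : α ≃ β) (w : Fin n → α) (b : β) :
    #{i | relabel E w i = b} = #{i | w i = E.symm b} :=
  card_equiv (relabelPerm E w) fun i => by
    rw [mem_filter, mem_filter]; simp [relabel, E.eq_symm_apply]

/-- The successor orbit words are sorted and determine the letters, so a rearrangement that
keeps them sorted fixes `w`. -/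
lemma comp_eq_self_of_monotone (w : Fin n → α) (ρ : Perm (Fin n))
    (hρ : Monotone fun x => toLex (orbitWord (Tuple.sort w) w (Tuple.sort w (ρ x)))) :
    w ∘ ρ = w := by
  set P := fun x => toLex (orbitWord (Tuple.sort w) w (Tuple.sort w x))
  have hP : Monotone P :=
    Prod.Lex.monotone_fst_ofLex.comp (strictMono_necklaceKey_sort w).monotone
  have hPρ : P ∘ ρ = P ∘ Equiv.refl _ := Tuple.unique_monotone hρ hP
  funext x
  exact eq_of_orbitWord_apply_eq _ w (toLex_inj.1 (congrFun hPρ x))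

lemma relabel_symm_relabel (E : α ≃ β) (w : Fin n → α) : relabel E.symm (relabel E w) = w := by
  set σ := Tuple.sort w
  set S := relabelPerm E w
  set T := relabelPerm E.symm (relabel E w)
  have hword : E.symm ∘ relabel E w = w ∘ S := by
    funext x; simp [relabel, S]
  have hT : T = Tuple.sort (necklaceKey (S⁻¹ * σ * S) (w ∘ S)) := by
    simp only [T, relabelPerm]
    rw [sort_relabel, hword]
  have hmono : Monotone fun x => toLex (orbitWord σ w (σ (S (T x)))) := fun x y hxy => by
    simpa [hT, necklaceKey, orbitWord_conj] using
      Prod.Lex.monotone_fst_ofLex (Tuple.monotone_sort (necklaceKey (S⁻¹ * σ * S) (w ∘ S)) hxy)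
  have h := comp_eq_self_of_monotone w (S * T) hmono
  rwa [Perm.coe_mul, ← Function.comp_assoc, ← hword] at h

lemma finSucc_castSucc {m : ℕ} (j : Fin m) : finSucc j.castSucc = j.succ :=
  Fin.ext (Nat.mod_eq_of_lt (by simp))

lemma strictMono_toLex_iff (f : Fin n → α) (σ : Perm (Fin n)) :
    (StrictMono fun i => toLex (f i, σ i)) ↔
      Monotone f ∧ ∀ i : Fin n, (i : ℕ) + 1 < n → i ∈ pDes σ → f i < f (finSucc i) := by
  constructor
  · intro h
    refine ⟨Prod.Lex.monotone_fst_ofLex.comp h.monotone, fun i hi hdes => ?_⟩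
    have hlt : i < finSucc i := Fin.lt_def.2 (by simp [finSucc, Nat.mod_eq_of_lt hi])
    have hdes' := ((mem_filter.1 hdes).2).2
    rcases Prod.Lex.toLex_lt_toLex.1 (h hlt) with hf | ⟨-, hσ⟩
    · exact hf
    · exact absurd hσ hdes'.not_gt
  · rintro ⟨hmono, hdes⟩
    cases n with
    | zero => exact fun i => i.elim0
    | succ m =>
      refine Fin.strictMono_iff_lt_succ.2 fun j => Prod.Lex.toLex_lt_toLex.2 ?_
      have hlt : j.castSucc < j.succ := Fin.castSucc_lt_succ
      refine (hmono hlt.le).lt_or_eq.imp id fun heq => ⟨heq, ?_⟩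
      by_contra hσ
      have hσ' : σ j.succ < σ j.castSucc :=
        (not_lt.1 hσ).lt_of_ne (σ.injective.ne hlt.ne')
      have hj : (j.castSucc : ℕ) + 1 < m + 1 := by simp
      have := hdes _ hj (mem_filter.2 ⟨mem_univ _, hj, by rwa [finSucc_castSucc]⟩)
      rw [finSucc_castSucc] at this
      exact this.ne heq

def HasContent (w : Fin n → ℕ) (d : ℕ →₀ ℕ) : Prop :=
  ∀ k, #{i | w i = k} = d k

lemma hasContent_comp_perm_iff (w : Fin n → ℕ) (ρ : Perm (Fin n)) (d : ℕ →₀ ℕ) :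
    HasContent (w ∘ ρ) d ↔ HasContent w d := by
  refine forall_congr' fun k => ?_
  rw [card_equiv (s := {i | (w ∘ ρ) i = k}) (t := {i | w i = k}) ρ fun i => by
    rw [mem_filter, mem_filter]; simp]

instance finite_hasContent (d : ℕ →₀ ℕ) : Finite {w : Fin n → ℕ // HasContent w d} := by
  have hmem : ∀ (w : {w : Fin n → ℕ // HasContent w d}) i, w.1 i ∈ d.support := fun w i => by
    rw [Finsupp.mem_support_iff, ← w.2 (w.1 i)]
    exact (card_pos.2 ⟨i, by simp⟩).ne'
  exact Finite.of_injective (fun w i => (⟨w.1 i, hmem w i⟩ : d.support))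
    fun w w' h => Subtype.ext (funext fun i => congrArg Subtype.val (congrFun h i))

lemma coeff_FQ_pDes (σ : Perm (Fin n)) (d : ℕ →₀ ℕ) :
    MvPowerSeries.coeff d (FQ n (pDes σ)) =
      Nat.card {w : Fin n → ℕ // Tuple.sort w = σ ∧ HasContent w d} := by
  refine congrArg Nat.cast (Nat.card_congr (Equiv.subtypeEquiv (σ.arrowCongr (Equiv.refl ℕ))
    fun f => ?_))
  have hcomp : σ.arrowCongr (Equiv.refl ℕ) f = f ∘ ⇑σ⁻¹ := rfl
  rw [hcomp, eq_comm, eq_sort_iff_strictMono, hasContent_comp_perm_iff]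
  simp only [Function.comp_apply, Perm.coe_inv, symm_apply_apply, strictMono_toLex_iff,
    and_assoc]
  rfl

lemma natCard_subtype_and_eq_sum {X ι : Type*} [Fintype ι] (g : X → ι) (p : ι → Prop)
    [DecidablePred p] (q : X → Prop) [Finite {x // q x}] :
    Nat.card {x // p (g x) ∧ q x} = ∑ i ∈ univ.filter p, Nat.card {x // g x = i ∧ q x} := by
  have (i : ι) : Finite {x // g x = i ∧ q x} :=
    Finite.of_injective (fun x => (⟨x.1, x.2.2⟩ : {x // q x}))
      fun x y h => Subtype.ext (Subtype.ext_iff.1 h :)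
  rw [sum_subtype (p := p) _ (fun i => by simp) fun i => Nat.card {x // g x = i ∧ q x},
    ← Nat.card_sigma]
  exact Nat.card_congr
    { toFun := fun x => ⟨⟨g x, x.2.1⟩, x, rfl, x.2.2⟩
      invFun := fun y => ⟨y.2, by rw [y.2.2.1]; exact y.1.2, y.2.2.2⟩
      left_inv := fun _ => rfl
      right_inv := fun ⟨⟨_, _⟩, _, rfl, _⟩ => rfl }

lemma coeff_QB_filter (P : Perm (Fin n) → Prop) [DecidablePred P] (d : ℕ →₀ ℕ) :
    MvPowerSeries.coeff d (QB n (univ.filter P).val) =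
      Nat.card {w : Fin n → ℕ // P (Tuple.sort w) ∧ HasContent w d} := by
  rw [natCard_subtype_and_eq_sum, Nat.cast_sum, ← sum_congr rfl fun σ _ => coeff_FQ_pDes σ d,
    QB, map_multiset_sum, Multiset.map_map]
  rfl

noncomputable def relabelEquiv (E : Perm ℕ) {P : Perm (Fin n) → Prop}
    (hP : ∀ σ τ, IsConj σ τ → P σ → P τ) (d : ℕ →₀ ℕ) :
    {w : Fin n → ℕ // P (Tuple.sort w) ∧ HasContent w d} ≃
      {w : Fin n → ℕ // P (Tuple.sort w) ∧ HasContent w (Finsupp.equivMapDomain E d)} where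
  toFun w := ⟨relabel E w.1, hP _ _ (isConj_sort_relabel E w.1) w.2.1, fun k => by
    rw [card_relabel_eq, w.2.2, Finsupp.equivMapDomain_apply]⟩
  invFun w := ⟨relabel E.symm w.1, hP _ _ (isConj_sort_relabel E.symm w.1) w.2.1, fun k => by
    rw [card_relabel_eq, w.2.2, Finsupp.equivMapDomain_apply, symm_symm, symm_apply_apply]⟩
  left_inv w := Subtype.ext (relabel_symm_relabel E w.1)
  right_inv w := Subtype.ext (by simpa using relabel_symm_relabel E.symm w.1)

lemma isSymmPS_QB_filter {P : Perm (Fin n) → Prop} [DecidablePred P]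
    (hP : ∀ σ τ, IsConj σ τ → P σ → P τ) :
    IsSymmPS (QB n (univ.filter P).val) := fun E d => by
  rw [coeff_QB_filter, coeff_QB_filter, Nat.card_congr (relabelEquiv E hP d)]

end GesselReutenauer

/-- Every conjugacy class of `S_n` is a symmetric set. -/
theorem conjugacy_class_symmetric (n : ℕ) (π : Equiv.Perm (Fin n)) :
    IsSymmPS (QB n (Finset.univ.filter fun σ : Equiv.Perm (Fin n) => IsConj π σ).val) :=
  GesselReutenauer.isSymmPS_QB_filter fun _ _ hστ hπσ => hπσ.trans hστ
end

section
/- There exist symmetric sets A, B ⊆ S_4 whose product AB is not symmetric: for A = {1324, 4132} and B = {2143, 2314}, Q(A) = Q(B) = m_{22} + m_{211} + 2m_{1111} is symmetric, but Q(AB) = M_{31} + M_{22} + 2M_{112} + 2M_{121} + 2M_{211} + 4M_{1111} is not symmetric. -/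
open scoped Classical

/-- The monomial quasisymmetric function `M_α` for a composition `α`, as a power
series in `x_0, x_1, …`. -/
noncomputable def Mq (α : List ℕ) : MvPowerSeries ℕ ℚ :=
  fun d => if ∃ g : Fin α.length → ℕ, StrictMono g ∧
      d = ∑ k : Fin α.length, Finsupp.single (g k) (α.get k) then 1 else 0

/-! A weakly increasing map `f : Fin n → ℕ` is determined by its fibre sizes, so the
coefficient of `x^d` in `F_{J,n}` is `0` or `1`: it is `1` exactly when the sorted
flattening of `d` ascends at every position of `J`. For `n = 4` the ascent set of that
flattening is read off from the composition of `x^d`, which gives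
`F_J = ∑_{K ⊇ J} M_{co(K)}`. Hence `Q(A) = Q(B) = m_{22} + m_{211} + 2 m_{1111}`, while in
`Q(AB)` the monomial `x₀³x₁` (from `M_{31}`) occurs but `x₀x₁³` does not. -/

noncomputable def monomialComp (d : ℕ →₀ ℕ) : List ℕ := d.support.sort.map d

theorem monomialComp_sum_single {ℓ : ℕ} {g : Fin ℓ → ℕ} (hg : StrictMono g) {α : Fin ℓ → ℕ}
    (hα : ∀ k, 0 < α k) : monomialComp (∑ k, Finsupp.single (g k) (α k)) = List.ofFn α := by
  set D := ∑ k, Finsupp.single (g k) (α k)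
  have hD : ∀ k, D (g k) = α k := fun k => by
    simp [D, Finsupp.finsetSum_apply, Finsupp.single_apply, hg.injective.eq_iff]
  have hsort : D.support.sort = List.ofFn g := by
    refine (Finset.sortedLT_sort _).eq_of_mem_iff (List.sortedLT_ofFn_iff.mpr hg) fun x => ?_
    simp only [Finset.mem_sort, Finsupp.mem_support_iff, List.mem_ofFn]
    constructor
    · intro hx
      by_contra! h
      exact hx (by simp [D, Finsupp.finsetSum_apply, h])
    · rintro ⟨k, rfl⟩
      exact (hD k).trans_ne (hα k).ne'
  rw [monomialComp, hsort, List.map_ofFn]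
  exact congrArg _ (funext hD)

theorem monomialComp_eq_ofFn {ℓ : ℕ} {g : Fin ℓ → ℕ} (hg : StrictMono g) {α : Fin ℓ → ℕ}
    (hα : ∀ k, 0 < α k) {d : ℕ →₀ ℕ} (hd : ∀ x, d x = ∑ k, if g k = x then α k else 0) :
    monomialComp d = List.ofFn α := by
  convert monomialComp_sum_single hg hα
  ext x
  simp [hd, Finsupp.finsetSum_apply, Finsupp.single_apply]

theorem exists_strictMono_eq_sum_single (d : ℕ →₀ ℕ) :
    ∃ g : Fin (monomialComp d).length → ℕ, StrictMono g ∧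
      d = ∑ k, Finsupp.single (g k) ((monomialComp d).get k) := by
  set L := d.support.sort
  have hlen : (monomialComp d).length = L.length := List.length_map _
  refine ⟨fun k => L.get (k.cast hlen),
    fun i j hij => (Finset.sortedLT_sort _).strictMono_get hij, ?_⟩
  calc d = ∑ x ∈ d.support, Finsupp.single x (d x) := (Finsupp.sum_single d).symm
    _ = (L.map fun x => Finsupp.single x (d x)).sum := by
        rw [Finset.sum_eq_multiset_sum, ← Finset.sort_eq d.support (· ≤ ·), Multiset.map_coe,
          Multiset.sum_coe]
    _ = ∑ k : Fin L.length, Finsupp.single L[k] (d L[k]) := (Fin.sum_univ_fun_getElem _ _).symm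
    _ = _ := Fintype.sum_equiv (finCongr hlen.symm) _ _ fun k => by
        simp [monomialComp, L]; rfl

theorem coeff_Mq {α : List ℕ} (hα : ∀ x ∈ α, 0 < x) (d : ℕ →₀ ℕ) :
    MvPowerSeries.coeff d (Mq α) = if monomialComp d = α then 1 else 0 := by
  refine if_congr ⟨?_, ?_⟩ rfl rfl
  · rintro ⟨g, hg, rfl⟩
    rw [monomialComp_sum_single hg fun k => hα _ (α.get_mem k), List.ofFn_get]
  · rintro rfl
    exact exists_strictMono_eq_sum_single d

theorem monomialComp_equivMapDomain_perm (e : Equiv.Perm ℕ) (d : ℕ →₀ ℕ) :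
    (monomialComp (Finsupp.equivMapDomain e d)).Perm (monomialComp d) := by
  rw [← Multiset.coe_eq_coe, monomialComp, monomialComp, ← Multiset.map_coe, ← Multiset.map_coe,
    Finset.sort_eq, Finset.sort_eq]
  change Multiset.map _ (d.support.map e.toEmbedding).val = _
  rw [Finset.map_val, Multiset.map_map]
  simp [Function.comp_def]

theorem sum_monomialComp (d : ℕ →₀ ℕ) :
    (monomialComp d).sum = Multiset.card (Finsupp.toMultiset d) := by
  rw [Finsupp.card_toMultiset, monomialComp, ← Multiset.sum_coe, ← Multiset.map_coe,
    Finset.sort_eq]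
  rfl

section Fibers

variable {n : ℕ}

theorem card_fiber_eq_iff (f : Fin n → ℕ) (d : ℕ →₀ ℕ) :
    (∀ k, (Finset.univ.filter fun i => f i = k).card = d k) ↔
      (List.ofFn f : Multiset ℕ) = Finsupp.toMultiset d := by
  rw [Multiset.ext]
  refine forall_congr' fun k => ?_
  rw [Finsupp.count_toMultiset, ← Fin.univ_val_map, Multiset.count_map, Finset.card_def,
    Finset.filter_val]
  simp only [eq_comm]

theorem ofFn_eq_sort_of_monotone {f : Fin n → ℕ} (hf : Monotone f) :
    List.ofFn f = (List.ofFn f : Multiset ℕ).sort :=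
  List.Perm.eq_of_sortedLE (List.sortedLE_ofFn_iff.mpr hf)
    (List.sortedLE_iff_pairwise.mpr (Multiset.pairwise_sort _ _))
    (Multiset.coe_eq_coe.mp (Multiset.sort_eq _ _).symm)

theorem monotone_eq_of_coe_ofFn_eq {f g : Fin n → ℕ} (hf : Monotone f) (hg : Monotone g)
    (h : (List.ofFn f : Multiset ℕ) = List.ofFn g) : f = g :=
  List.ofFn_injective <| by rw [ofFn_eq_sort_of_monotone hf, ofFn_eq_sort_of_monotone hg, h]

theorem exists_monotone_of_card_toMultiset {d : ℕ →₀ ℕ}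
    (hd : Multiset.card (Finsupp.toMultiset d) = n) :
    ∃ f : Fin n → ℕ, Monotone f ∧ (List.ofFn f : Multiset ℕ) = Finsupp.toMultiset d := by
  obtain ⟨l, hl, hlen, hsort⟩ : ∃ l : List ℕ, (l : Multiset ℕ) = Finsupp.toMultiset d ∧
      l.length = n ∧ l.SortedLE :=
    ⟨_, Multiset.sort_eq _ _, (Multiset.length_sort _).trans hd,
      List.sortedLE_iff_pairwise.mpr (Multiset.pairwise_sort _ _)⟩
  subst hlen
  exact ⟨fun i => l[i], hsort, by simpa using hl⟩

def ascents (f : Fin n → ℕ) : Finset (Fin n) :=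
  Finset.univ.filter fun i => (i : ℕ) + 1 < n ∧ f i < f (finSucc i)

theorem coeff_FQ {J : Finset (Fin n)} (hJ : ∀ i ∈ J, (i : ℕ) + 1 < n) (d : ℕ →₀ ℕ) :
    MvPowerSeries.coeff d (FQ n J) = if ∃ f : Fin n → ℕ, Monotone f ∧
      (List.ofFn f : Multiset ℕ) = Finsupp.toMultiset d ∧ J ⊆ ascents f then 1 else 0 := by
  set P := fun f : Fin n → ℕ => Monotone f ∧
    (List.ofFn f : Multiset ℕ) = Finsupp.toMultiset d ∧ J ⊆ ascents f
  have hP : ∀ f, P f ↔ (∀ i j : Fin n, i ≤ j → f i ≤ f j) ∧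
      (∀ i : Fin n, (i : ℕ) + 1 < n → i ∈ J → f i < f (finSucc i)) ∧
      (∀ k : ℕ, (Finset.univ.filter fun i => f i = k).card = d k) := fun f => by
    simp only [P, card_fiber_eq_iff, Finset.subset_iff, ascents, Finset.mem_filter,
      Finset.mem_univ, true_and]
    refine and_congr ⟨fun h i j => @h i j, fun h i j => h i j⟩ (and_comm.trans ?_)
    exact and_congr_left' ⟨fun h i _ hi => (h hi).2, fun h i hi => ⟨hJ i hi, h i (hJ i hi) hi⟩⟩
  have : Subsingleton {f // P f} := ⟨fun ⟨f, hf⟩ ⟨g, hg⟩ => Subtype.ext <|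
    monotone_eq_of_coe_ofFn_eq hf.1 hg.1 (hf.2.1.trans hg.2.1.symm)⟩
  change (Nat.card {f // _} : ℚ) = _
  rw [← Nat.card_congr (Equiv.subtypeEquivRight hP)]
  split_ifs with h
  · obtain ⟨f, hf⟩ := h
    have : Unique {f // P f} := ⟨⟨⟨f, hf⟩⟩, fun _ => Subsingleton.elim _ _⟩
    simp
  · have : IsEmpty {f // P f} := ⟨fun ⟨f, hf⟩ => h ⟨f, hf⟩⟩
    simp

end Fibers

theorem sort_eq_filter_finRange {n : ℕ} (J : Finset (Fin n)) :
    J.sort = (List.finRange n).filter (· ∈ J) :=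
  (Finset.sortedLT_sort J).eq_of_mem_iff
    (List.sortedLT_iff_pairwise.mpr ((List.sortedLT_finRange n).pairwise.filter _))
    (by simp)

/-- Unlike `Finset.sort`, this form of `compList` reduces in the kernel, so that facts about
`compList 4 K` can be settled by `decide`. -/
theorem compList_eq_filter {n : ℕ} (J : Finset (Fin n)) :
    compList n J = List.zipWith (· - ·)
      (((List.finRange n).filter (· ∈ J)).map (fun i => (i : ℕ) + 1) ++ [n])
      (0 :: ((List.finRange n).filter (· ∈ J)).map fun i => (i : ℕ) + 1) := by
  rw [compList, sort_eq_filter_finRange]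

theorem compList_four_pos {K : Finset (Fin 4)} (hK : K ⊆ {0, 1, 2}) :
    ∀ x ∈ compList 4 K, 0 < x := by
  rw [← Finset.mem_powerset] at hK
  rw [compList_eq_filter]
  revert K
  decide

theorem compList_four_sum {K : Finset (Fin 4)} (hK : K ⊆ {0, 1, 2}) :
    (compList 4 K).sum = 4 := by
  rw [← Finset.mem_powerset] at hK
  rw [compList_eq_filter]
  revert K
  decide

theorem compList_four_inj {K L : Finset (Fin 4)} (hK : K ⊆ {0, 1, 2}) (hL : L ⊆ {0, 1, 2})
    (h : compList 4 K = compList 4 L) : K = L := by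
  rw [← Finset.mem_powerset] at hK hL
  rw [compList_eq_filter, compList_eq_filter] at h
  revert K L
  decide

theorem ascents_subset_four (f : Fin 4 → ℕ) : ascents f ⊆ {0, 1, 2} := by
  intro i hi
  simp only [ascents, Finset.mem_filter] at hi
  fin_cases i <;> simp_all

theorem monomialComp_of_le_four {a b c e : ℕ} (hab : a ≤ b) (hbc : b ≤ c) (hce : c ≤ e)
    {d : ℕ →₀ ℕ} (hd : ∀ x, d x = (if a = x then 1 else 0) + (if b = x then 1 else 0) +
      (if c = x then 1 else 0) + (if e = x then 1 else 0)) :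
    monomialComp d = compList 4 (ascents ![a, b, c, e]) := by
  have hsucc : finSucc (0 : Fin 4) = 1 ∧ finSucc (1 : Fin 4) = 2 ∧ finSucc (2 : Fin 4) = 3 := by
    decide
  rw [compList_eq_filter, show List.finRange 4 = [0, 1, 2, 3] from rfl]
  simp only [ascents, Finset.mem_filter, Finset.mem_univ, true_and]
  simp [List.filter_cons, hsucc.1, hsucc.2.1, hsucc.2.2]
  rcases hab.lt_or_eq with hab | rfl <;> rcases hbc.lt_or_eq with hbc | rfl <;>
    rcases hce.lt_or_eq with hce | rfl <;> simp only [lt_self_iff_false, hab, hbc, hce] <;> simp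
  -- `g` lists the distinct values among `a ≤ b ≤ c ≤ e`, `α` their multiplicities
  · exact monomialComp_eq_ofFn (g := ![a, b, c, e]) (α := ![1, 1, 1, 1])
      (by simp [Fin.strictMono_iff_lt_succ, Fin.forall_fin_succ, *]) (by decide)
      (by simp [hd, Fin.sum_univ_succ]; grind)
  · exact monomialComp_eq_ofFn (g := ![a, b, c]) (α := ![1, 1, 2])
      (by simp [Fin.strictMono_iff_lt_succ, Fin.forall_fin_succ, *]) (by decide)
      (by simp [hd, Fin.sum_univ_succ]; grind)
  · exact monomialComp_eq_ofFn (g := ![a, b, e]) (α := ![1, 2, 1])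
      (by simp [Fin.strictMono_iff_lt_succ, Fin.forall_fin_succ, *]) (by decide)
      (by simp [hd, Fin.sum_univ_succ]; grind)
  · exact monomialComp_eq_ofFn (g := ![a, b]) (α := ![1, 3])
      (by simp [Fin.strictMono_iff_lt_succ, Fin.forall_fin_succ, *]) (by decide)
      (by simp [hd, Fin.sum_univ_succ]; grind)
  · exact monomialComp_eq_ofFn (g := ![a, c, e]) (α := ![2, 1, 1])
      (by simp [Fin.strictMono_iff_lt_succ, Fin.forall_fin_succ, *]) (by decide)
      (by simp [hd, Fin.sum_univ_succ]; grind)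
  · exact monomialComp_eq_ofFn (g := ![a, c]) (α := ![2, 2])
      (by simp [Fin.strictMono_iff_lt_succ, Fin.forall_fin_succ, *]) (by decide)
      (by simp [hd, Fin.sum_univ_succ]; grind)
  · exact monomialComp_eq_ofFn (g := ![a, e]) (α := ![3, 1])
      (by simp [Fin.strictMono_iff_lt_succ, Fin.forall_fin_succ, *]) (by decide)
      (by simp [hd, Fin.sum_univ_succ]; grind)
  · exact monomialComp_eq_ofFn (g := ![a]) (α := ![4]) (Subsingleton.strictMono _) (by decide)
      (by simp [hd]; grind)

theorem monomialComp_of_monotone_four {f : Fin 4 → ℕ} (hf : Monotone f) {d : ℕ →₀ ℕ}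
    (hd : (List.ofFn f : Multiset ℕ) = Finsupp.toMultiset d) :
    monomialComp d = compList 4 (ascents f) := by
  obtain ⟨a, b, c, e, rfl⟩ : ∃ a b c e, f = ![a, b, c, e] :=
    ⟨f 0, f 1, f 2, f 3, by ext i; fin_cases i <;> rfl⟩
  refine monomialComp_of_le_four (hf (show (0 : Fin 4) ≤ 1 by decide))
    (hf (show (1 : Fin 4) ≤ 2 by decide)) (hf (show (2 : Fin 4) ≤ 3 by decide)) fun x => ?_
  rw [← (card_fiber_eq_iff _ d).mpr hd x, Finset.card_filter, Fin.sum_univ_four]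

theorem monomialComp_eq_compList_four_iff {K : Finset (Fin 4)} (hK : K ⊆ {0, 1, 2})
    (d : ℕ →₀ ℕ) : monomialComp d = compList 4 K ↔
      ∃ f : Fin 4 → ℕ, Monotone f ∧ (List.ofFn f : Multiset ℕ) = Finsupp.toMultiset d ∧
        ascents f = K := by
  constructor
  · intro h
    have hcard : Multiset.card (Finsupp.toMultiset d) = 4 := by
      rw [← sum_monomialComp, h, compList_four_sum hK]
    obtain ⟨f, hf, hfd⟩ := exists_monotone_of_card_toMultiset hcard
    refine ⟨f, hf, hfd, compList_four_inj (ascents_subset_four f) hK ?_⟩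
    rw [← monomialComp_of_monotone_four hf hfd, h]
  · rintro ⟨f, hf, hfd, rfl⟩
    exact monomialComp_of_monotone_four hf hfd

theorem FQ_four_eq_sum {J : Finset (Fin 4)} (hJ : J ⊆ {0, 1, 2}) :
    FQ 4 J = ∑ K ∈ (Finset.powerset {0, 1, 2} : Finset (Finset (Fin 4))) with J ⊆ K,
      Mq (compList 4 K) := by
  ext d
  have hJ' : ∀ i ∈ J, (i : ℕ) + 1 < 4 := fun i hi => by
    have := hJ hi
    fin_cases i <;> simp_all
  rw [coeff_FQ hJ', map_sum, Finset.sum_congr rfl fun K hK => by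
    have hK' := Finset.mem_powerset.1 (Finset.mem_filter.1 hK).1
    rw [coeff_Mq (compList_four_pos hK'),
      if_congr (monomialComp_eq_compList_four_iff hK' d) rfl rfl]]
  by_cases hex : ∃ f : Fin 4 → ℕ, Monotone f ∧ (List.ofFn f : Multiset ℕ) = Finsupp.toMultiset d
  · obtain ⟨f, hf, hfd⟩ := hex
    have hunique : ∀ P : (Fin 4 → ℕ) → Prop, (∃ g, Monotone g ∧
        (List.ofFn g : Multiset ℕ) = Finsupp.toMultiset d ∧ P g) ↔ P f := fun P =>
      ⟨fun ⟨g, hg, hgd, hPg⟩ => monotone_eq_of_coe_ofFn_eq hg hf (hgd.trans hfd.symm) ▸ hPg,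
        fun hPf => ⟨f, hf, hfd, hPf⟩⟩
    simp only [hunique]
    simp [ascents_subset_four f]
  · have hnone : ∀ P : (Fin 4 → ℕ) → Prop, ¬ ∃ g, Monotone g ∧
        (List.ofFn g : Multiset ℕ) = Finsupp.toMultiset d ∧ P g :=
      fun P ⟨g, hg, hgd, _⟩ => hex ⟨g, hg, hgd⟩
    simp only [hnone, if_false, Finset.sum_const_zero]

theorem FQ_four_one : FQ 4 {1} = Mq [2, 2] + Mq [1, 1, 2] + Mq [2, 1, 1] + Mq [1, 1, 1, 1] := by
  rw [FQ_four_eq_sum (by decide), show (Finset.powerset {0, 1, 2} : Finset (Finset (Fin 4))).filter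
    ({1} ⊆ ·) = {{1}, {0, 1}, {1, 2}, {0, 1, 2}} by decide]
  simp (disch := decide) only [Finset.sum_insert, Finset.sum_singleton]
  simp [compList_eq_filter, List.finRange_succ]
  abel

theorem FQ_four_two : FQ 4 {2} = Mq [3, 1] + Mq [1, 2, 1] + Mq [2, 1, 1] + Mq [1, 1, 1, 1] := by
  rw [FQ_four_eq_sum (by decide), show (Finset.powerset {0, 1, 2} : Finset (Finset (Fin 4))).filter
    ({2} ⊆ ·) = {{2}, {0, 2}, {1, 2}, {0, 1, 2}} by decide]
  simp (disch := decide) only [Finset.sum_insert, Finset.sum_singleton]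
  simp [compList_eq_filter, List.finRange_succ]
  abel

theorem FQ_four_zero_one : FQ 4 {0, 1} = Mq [1, 1, 2] + Mq [1, 1, 1, 1] := by
  rw [FQ_four_eq_sum (by decide), show (Finset.powerset {0, 1, 2} : Finset (Finset (Fin 4))).filter
    ({0, 1} ⊆ ·) = {{0, 1}, {0, 1, 2}} by decide]
  simp (disch := decide) only [Finset.sum_insert, Finset.sum_singleton]
  simp [compList_eq_filter, List.finRange_succ]

theorem FQ_four_zero_two : FQ 4 {0, 2} = Mq [1, 2, 1] + Mq [1, 1, 1, 1] := by
  rw [FQ_four_eq_sum (by decide), show (Finset.powerset {0, 1, 2} : Finset (Finset (Fin 4))).filter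
    ({0, 2} ⊆ ·) = {{0, 2}, {0, 1, 2}} by decide]
  simp (disch := decide) only [Finset.sum_insert, Finset.sum_singleton]
  simp [compList_eq_filter, List.finRange_succ]

theorem IsSymmPS.add {F G : MvPowerSeries ℕ ℚ} (hF : IsSymmPS F) (hG : IsSymmPS G) :
    IsSymmPS (F + G) := fun e d => by
  simp only [map_add, hF e d, hG e d]

theorem IsSymmPS.nsmul {F : MvPowerSeries ℕ ℚ} (hF : IsSymmPS F) (k : ℕ) : IsSymmPS (k • F) :=
  fun e d => by simp only [map_nsmul, hF e d]

noncomputable def msymm (μ : List ℕ) : MvPowerSeries ℕ ℚ := ∑ α ∈ μ.permutations.toFinset, Mq α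

theorem isSymmPS_msymm {μ : List ℕ} (hμ : ∀ x ∈ μ, 0 < x) : IsSymmPS (msymm μ) := by
  have hcoeff : ∀ d, MvPowerSeries.coeff d (msymm μ) =
      if (monomialComp d).Perm μ then 1 else 0 := fun d => by
    rw [msymm, map_sum, Finset.sum_congr rfl fun α hα => coeff_Mq (fun x hx => hμ x
      ((List.mem_permutations.1 (List.mem_toFinset.1 hα)).subset hx)) d, Finset.sum_ite_eq]
    simp
  intro e d
  have hperm := monomialComp_equivMapDomain_perm e d
  rw [hcoeff, hcoeff, if_congr ⟨hperm.symm.trans, hperm.trans⟩ rfl rfl]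

theorem msymm_combination_eq : msymm [2, 2] + msymm [2, 1, 1] + 2 • msymm [1, 1, 1, 1] =
    Mq [2, 2] + (Mq [2, 1, 1] + Mq [1, 2, 1] + Mq [1, 1, 2]) + 2 • Mq [1, 1, 1, 1] := by
  simp [msymm, List.permutations]
  abel

theorem not_isSymmPS_M31_add : ¬ IsSymmPS (Mq [3, 1] + Mq [2, 2] + 2 • Mq [1, 1, 2] +
    2 • Mq [1, 2, 1] + 2 • Mq [2, 1, 1] + 4 • Mq [1, 1, 1, 1]) := by
  intro hsym
  set d : ℕ →₀ ℕ := Finsupp.single 0 3 + Finsupp.single 1 1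
  have h31 : monomialComp d = [3, 1] :=
    monomialComp_eq_ofFn (g := ![0, 1]) (α := ![3, 1]) (by decide) (by decide)
      fun x => by simp [d, Finsupp.single_apply]; grind
  have h13 : monomialComp (Finsupp.equivMapDomain (Equiv.swap 0 1) d) = [1, 3] :=
    monomialComp_eq_ofFn (g := ![0, 1]) (α := ![1, 3]) (by decide) (by decide)
      fun x => by simp [d, Finsupp.single_apply, Equiv.swap_apply_def]; grind
  have h := hsym (Equiv.swap 0 1) d
  simp (disch := decide) only [map_add, map_nsmul, coeff_Mq, h31, h13] at h
  norm_num at h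

theorem QB_pair {n : ℕ} (a b : Equiv.Perm (Fin n)) :
    QB n {a, b} = FQ n (pDes a) + FQ n (pDes b) := by
  simp [QB]

theorem QB_mprod_pair {n : ℕ} (a₁ a₂ b₁ b₂ : Equiv.Perm (Fin n)) :
    QB n (mprod {a₁, a₂} {b₁, b₂}) = FQ n (pDes (a₁ * b₁)) + FQ n (pDes (a₁ * b₂)) +
      (FQ n (pDes (a₂ * b₁)) + FQ n (pDes (a₂ * b₂))) := by
  simp [QB, mprod]
  abel

/-- For `A = {1324, 4132}` and `B = {2143, 2314}` in `S_4`,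
`Q(A) = Q(B) = m_{22} + m_{211} + 2m_{1111}` is symmetric, but
`Q(AB) = M_{31} + M_{22} + 2M_{112} + 2M_{121} + 2M_{211} + 4M_{1111}`
is not symmetric. -/
theorem product_not_symmetric :
    let A : Multiset (Equiv.Perm (Fin 4)) :=
      {Equiv.swap 1 2, ([0, 3, 1] : List (Fin 4)).formPerm}
    let B : Multiset (Equiv.Perm (Fin 4)) :=
      {Equiv.swap 0 1 * Equiv.swap 2 3, ([0, 1, 2] : List (Fin 4)).formPerm}
    QB 4 A = Mq [2, 2] + (Mq [2, 1, 1] + Mq [1, 2, 1] + Mq [1, 1, 2]) +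
        2 • Mq [1, 1, 1, 1] ∧
    QB 4 B = Mq [2, 2] + (Mq [2, 1, 1] + Mq [1, 2, 1] + Mq [1, 1, 2]) +
        2 • Mq [1, 1, 1, 1] ∧
    IsSymmPS (QB 4 A) ∧ IsSymmPS (QB 4 B) ∧
    QB 4 (mprod A B) = Mq [3, 1] + Mq [2, 2] + 2 • Mq [1, 1, 2] + 2 • Mq [1, 2, 1] +
        2 • Mq [2, 1, 1] + 4 • Mq [1, 1, 1, 1] ∧
    ¬ IsSymmPS (QB 4 (mprod A B)) := by
  intro A B
  have hA : QB 4 A = FQ 4 {1} + FQ 4 {0, 2} := by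
    rw [QB_pair]; rfl
  have hB : QB 4 B = FQ 4 {0, 2} + FQ 4 {1} := by
    rw [QB_pair]; rfl
  have hAB : QB 4 (mprod A B) = FQ 4 {0, 2} + FQ 4 {0, 1} + (FQ 4 {1} + FQ 4 {2}) := by
    rw [QB_mprod_pair]; rfl
  have hQA : FQ 4 {1} + FQ 4 {0, 2} =
      Mq [2, 2] + (Mq [2, 1, 1] + Mq [1, 2, 1] + Mq [1, 1, 2]) + 2 • Mq [1, 1, 1, 1] := by
    rw [FQ_four_one, FQ_four_zero_two]; abel
  have hQAB : FQ 4 {0, 2} + FQ 4 {0, 1} + (FQ 4 {1} + FQ 4 {2}) =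
      Mq [3, 1] + Mq [2, 2] + 2 • Mq [1, 1, 2] + 2 • Mq [1, 2, 1] + 2 • Mq [2, 1, 1] +
        4 • Mq [1, 1, 1, 1] := by
    rw [FQ_four_zero_two, FQ_four_zero_one, FQ_four_one, FQ_four_two]; abel
  have hsymm : IsSymmPS (FQ 4 {1} + FQ 4 {0, 2}) := by
    rw [hQA, ← msymm_combination_eq]
    exact ((isSymmPS_msymm (by decide)).add (isSymmPS_msymm (by decide))).add
      ((isSymmPS_msymm (by decide)).nsmul 2)
  rw [hA, hB, add_comm (FQ 4 {0, 2}), hAB, hQAB, ← hQA]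
  exact ⟨rfl, rfl, hsymm, hsymm, rfl, not_isSymmPS_M31_add⟩
end

section
/- A multiset B ⊆ S_n is D-symmetric if and only if for each ordered set partition U = (U, V) of [n] into exactly two blocks there exists a bijection Ψ_U : B → B satisfying the D-symmetry condition: for each u ∈ U* and π ∈ B, u ∈ Des(π) ⟺ δ_U(u) ∈ Des(Ψ_U(π)). -/
/-
Merging the first two blocks `s`, `t` of an ordered set partition `U` gives a partition `V`
with one block fewer, and `δ_U = δ_P ∘ δ_V` for the two-block partition
`P = (δ_V(s), δ_V(s)ᶜ)`: `δ_V` already sorts everything except that `s` and `t` are interleaved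
inside its first block, and `δ_P` separates them. Every `u ∈ U*` lies in `V*` and
`δ_V(u) ∈ P*`, because `δ_V` sends consecutive elements of a block to consecutive values, so the
bijections for `V` (by induction on the number of blocks) and for `P` compose to one for `U`.
Permutations are compared through the order they induce: `δ_U` is the unique permutation with
`δ_U x < δ_U y` iff `(block of x, x) < (block of y, y)` lexicographically.
-/

open scoped Classical

open Equiv Finset

section

variable {n : ℕ}

lemma lt_iff_lt_of_lt_imp_lt {ι α β : Type*} [LinearOrder α] [LinearOrder β] {f : ι → α}
    {g : ι → β} (hg : Function.Injective g) (h : ∀ x y, g x < g y → f x < f y) {x y : ι} :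
    f x < f y ↔ g x < g y := by
  refine ⟨fun hf => ?_, h x y⟩
  rcases lt_trichotomy (g x) (g y) with hlt | heq | hgt
  · exact hlt
  · exact absurd hf (by rw [hg heq]; exact lt_irrefl _)
  · exact absurd (h y x hgt) hf.not_gt

lemma exists_perm_lt_iff_lt {α : Type*} [LinearOrder α] {f : Fin n → α}
    (hf : Function.Injective f) : ∃ σ : Perm (Fin n), ∀ x y, σ x < σ y ↔ f x < f y := by
  let e := (univ.image f).orderIsoOfFin (by rw [card_image_of_injective _ hf, card_fin])
  let g : Fin n → Fin n := fun x => e.symm ⟨f x, mem_image_of_mem f (mem_univ x)⟩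
  have hg : ∀ x y, g x < g y ↔ f x < f y := fun x y => e.symm.lt_iff_lt.trans Subtype.mk_lt_mk
  have hg_inj : Function.Injective g := fun x y hxy =>
    hf (le_antisymm (not_lt.1 fun h => ((hg y x).2 h).ne' hxy)
      (not_lt.1 fun h => ((hg x y).2 h).ne hxy))
  exact ⟨Equiv.ofBijective g (Finite.injective_iff_bijective.mp hg_inj), hg⟩

lemma Equiv.Perm.val_eq_card_lt (σ : Perm (Fin n)) (x : Fin n) :
    (σ x : ℕ) = #{y | σ y < σ x} := by
  rw [← Fin.card_Iio (σ x), ← card_map σ.symm.toEmbedding]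
  congr 1
  ext z
  simp

lemma Equiv.Perm.eq_of_lt_iff_lt {σ τ : Perm (Fin n)} (h : ∀ x y, σ x < σ y ↔ τ x < τ y) :
    σ = τ := by
  have hmono : StrictMono (σ ∘ τ.symm) := fun a b hab => by
    simpa using (h (τ.symm a) (τ.symm b)).2 (by simpa using hab)
  have hid : σ ∘ τ.symm = id := (hmono.range_inj strictMono_id).1 <| by
    rw [(σ.surjective.comp τ.symm.surjective).range_eq, Set.range_id]
  ext x
  simpa using congrArg Fin.val (congrFun hid (τ x))

end

section

variable {n : ℕ}

def blockIdx (U : List (Finset (Fin n))) (x : Fin n) : ℕ := U.findIdx (x ∈ ·)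

def blockKey (U : List (Finset (Fin n))) (x : Fin n) : ℕ ×ₗ Fin n := toLex (blockIdx U x, x)

lemma blockIdx_cons (s : Finset (Fin n)) (U : List (Finset (Fin n))) (x : Fin n) :
    blockIdx (s :: U) x = if x ∈ s then 0 else blockIdx U x + 1 := by
  simp [blockIdx, List.findIdx_cons, cond_eq_ite]

variable {U : List (Finset (Fin n))}

lemma blockIdx_lt_length (hcov : ∀ x : Fin n, ∃ s ∈ U, x ∈ s) (x : Fin n) :
    blockIdx U x < U.length :=
  List.findIdx_lt_length_of_exists (by simpa using hcov x)

lemma mem_getElem_blockIdx (hcov : ∀ x : Fin n, ∃ s ∈ U, x ∈ s) (x : Fin n) :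
    x ∈ U[blockIdx U x]'(blockIdx_lt_length hcov x) :=
  of_decide_eq_true (List.findIdx_getElem (w := blockIdx_lt_length hcov x))

lemma blockIdx_eq_of_mem (hd : U.Pairwise Disjoint) {i : ℕ} (hi : i < U.length) {x : Fin n}
    (hx : x ∈ U[i]) : blockIdx U x = i := by
  rw [blockIdx, List.findIdx_eq hi]
  refine ⟨by simpa using hx, fun j hj => ?_⟩
  simpa using disjoint_right.mp (List.pairwise_iff_getElem.mp hd j i _ hi hj) hx

lemma blockKey_injective (U : List (Finset (Fin n))) : Function.Injective (blockKey U) :=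
  fun x y h => by simpa [blockKey] using congrArg (fun p => (ofLex p).2) h

lemma blockKey_lt_blockKey {x y : Fin n} : blockKey U x < blockKey U y ↔
    blockIdx U x < blockIdx U y ∨ blockIdx U x = blockIdx U y ∧ x < y :=
  Prod.Lex.toLex_lt_toLex

lemma filter_blockIdx_eq (hU : OSPn n U) {i : ℕ} (hi : i < U.length) :
    univ.filter (fun y => blockIdx U y = i) = U[i] := by
  ext y
  refine ⟨fun hy => ?_, fun hy => by simpa using blockIdx_eq_of_mem hU.1 hi hy⟩
  have := mem_getElem_blockIdx hU.2.2 y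
  simp only [mem_filter, mem_univ, true_and] at hy
  simpa [hy] using this

lemma card_filter_blockIdx_lt (hU : OSPn n U) {i : ℕ} (hi : i ≤ U.length) :
    #{y | blockIdx U y < i} = ((U.map Finset.card).take i).sum := by
  induction i with
  | zero => simp
  | succ i ih =>
    have hi' : i < U.length := hi
    have hsplit : univ.filter (fun y => blockIdx U y < i + 1) =
        univ.filter (fun y => blockIdx U y < i) ∪ univ.filter (fun y => blockIdx U y = i) := by
      ext y; simp only [mem_filter, mem_univ, true_and, mem_union]; omega
    rw [hsplit, card_union_of_disjoint (disjoint_filter.2 fun _ _ h => h.ne), ih hi'.le,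
      filter_blockIdx_eq hU hi', List.sum_take_succ _ _ (by simpa using hi')]
    simp

lemma finSucc_val {u : Fin n} (hu : (u : ℕ) + 1 < n) : (finSucc u : ℕ) = u + 1 :=
  Nat.mod_eq_of_lt hu

lemma mem_Ustar_iff_s14 (hU : OSPn n U) {u : Fin n} :
    u ∈ Ustar n U ↔ (u : ℕ) + 1 < n ∧ blockIdx U u = blockIdx U (finSucc u) := by
  simp only [Ustar, mem_filter, mem_univ, true_and]
  refine and_congr_right fun _ => ⟨?_, fun h => ?_⟩
  · rintro ⟨s, hs, hu, hsu⟩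
    obtain ⟨i, hi, rfl⟩ := List.getElem_of_mem hs
    rw [blockIdx_eq_of_mem hU.1 hi hu, blockIdx_eq_of_mem hU.1 hi hsu]
  · refine ⟨_, List.getElem_mem _, mem_getElem_blockIdx hU.2.2 u, ?_⟩
    have := mem_getElem_blockIdx hU.2.2 (finSucc u)
    simpa only [← h] using this

end

section

variable {n : ℕ} {U : List (Finset (Fin n))} {δ : Perm (Fin n)}

lemma IsDelta.lt_of_blockKey_lt (hcov : ∀ x : Fin n, ∃ s ∈ U, x ∈ s)
    (hδ : IsDelta (U.map Finset.card) U δ) {x y : Fin n} (h : blockKey U x < blockKey U y) :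
    δ x < δ y := by
  have hx := hδ _ (blockIdx_lt_length hcov x)
  have hy := hδ _ (blockIdx_lt_length hcov y)
  simp only [List.get_eq_getElem] at hx hy
  rcases blockKey_lt_blockKey.1 h with hlt | ⟨heq, hxy⟩
  · have hmono : ((U.map Finset.card).take (blockIdx U x + 1)).sum ≤
        ((U.map Finset.card).take (blockIdx U y)).sum := List.monotone_sum_take _ hlt
    have := (hx.2 x (mem_getElem_blockIdx hcov x)).2
    have := (hy.2 y (mem_getElem_blockIdx hcov y)).1
    rw [Fin.lt_def]
    omega
  · have hyx : y ∈ U[blockIdx U x]'(blockIdx_lt_length hcov x) := by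
      simpa only [heq] using mem_getElem_blockIdx hcov y
    exact hx.1 x (mem_getElem_blockIdx hcov x) y hyx hxy

lemma IsDelta.lt_iff (hcov : ∀ x : Fin n, ∃ s ∈ U, x ∈ s)
    (hδ : IsDelta (U.map Finset.card) U δ) {x y : Fin n} :
    δ x < δ y ↔ blockKey U x < blockKey U y :=
  lt_iff_lt_of_lt_imp_lt (blockKey_injective U) fun _ _ => hδ.lt_of_blockKey_lt hcov

lemma IsDelta.val_finSucc (hcov : ∀ x : Fin n, ∃ s ∈ U, x ∈ s)
    (hδ : IsDelta (U.map Finset.card) U δ) {u : Fin n} (hu : (u : ℕ) + 1 < n)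
    (hblock : blockIdx U u = blockIdx U (finSucc u)) : (δ (finSucc u) : ℕ) = δ u + 1 := by
  have hcovBy : δ u ⋖ δ (finSucc u) := by
    refine ⟨?_, fun w hw hw' => ?_⟩
    · rw [hδ.lt_iff hcov, blockKey_lt_blockKey, Fin.lt_def, finSucc_val hu]
      omega
    · obtain ⟨z, rfl⟩ := δ.surjective w
      rw [hδ.lt_iff hcov, blockKey_lt_blockKey, Fin.lt_def] at hw hw'
      rw [finSucc_val hu] at hw'
      omega
  exact (Order.covBy_iff_add_one_eq.1 (Fin.covBy_iff.1 hcovBy)).symm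

theorem exists_isDelta (hU : OSPn n U) : ∃ δ : Perm (Fin n), IsDelta (U.map Finset.card) U δ := by
  obtain ⟨δ, hδ⟩ := exists_perm_lt_iff_lt (blockKey_injective U)
  refine ⟨δ, fun i hi => ⟨fun x hx y hy hxy => (hδ x y).2 ?_, fun x hx => ?_⟩⟩
  · simp only [List.get_eq_getElem] at hx hy
    rw [blockKey_lt_blockKey, blockIdx_eq_of_mem hU.1 hi hx, blockIdx_eq_of_mem hU.1 hi hy]
    exact Or.inr ⟨rfl, hxy⟩
  simp only [List.get_eq_getElem] at hx
  have hxi := blockIdx_eq_of_mem hU.1 hi hx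
  rw [δ.val_eq_card_lt, ← card_filter_blockIdx_lt hU hi.le, ← card_filter_blockIdx_lt hU hi]
  simp only [hδ, blockKey_lt_blockKey, hxi]
  constructor
  · exact card_le_card fun y => by simp only [mem_filter, mem_univ, true_and]; omega
  · refine card_lt_card ((ssubset_iff_of_subset fun y => ?_).2 ⟨x, ?_⟩)
    · simp only [mem_filter, mem_univ, true_and]; omega
    · simp [hxi]

end

section

variable {n : ℕ}

def DSymmAt (B : Multiset (Perm (Fin n))) (U : List (Finset (Fin n))) (δ : Perm (Fin n)) :
    Prop :=
  ∃ Ψ : Perm (Fin n) → Perm (Fin n), B.map Ψ = B ∧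
    ∀ u ∈ Ustar n U, ∀ π ∈ B, (u ∈ pDes π ↔ δ u ∈ pDes (Ψ π))

variable {B : Multiset (Perm (Fin n))} {U : List (Finset (Fin n))} {δ : Perm (Fin n)}

lemma dsymmAt_of_forall_mem_Ustar (h : ∀ u ∈ Ustar n U, δ u = u) : DSymmAt B U δ :=
  ⟨id, B.map_id, fun u hu _ _ => by rw [h u hu]; rfl⟩

lemma DSymmAt.mul {U₁ U₂ : List (Finset (Fin n))} {δ₁ δ₂ : Perm (Fin n)}
    (h₁ : DSymmAt B U₁ δ₁) (h₂ : DSymmAt B U₂ δ₂)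
    (hU : ∀ u ∈ Ustar n U, u ∈ Ustar n U₁ ∧ δ₁ u ∈ Ustar n U₂) : DSymmAt B U (δ₂ * δ₁) := by
  obtain ⟨Ψ₁, hΨ₁, h₁⟩ := h₁
  obtain ⟨Ψ₂, hΨ₂, h₂⟩ := h₂
  refine ⟨Ψ₂ ∘ Ψ₁, by rw [← Multiset.map_map, hΨ₁, hΨ₂], fun u hu π hπ => ?_⟩
  have hπ₁ : Ψ₁ π ∈ B := hΨ₁ ▸ Multiset.mem_map_of_mem Ψ₁ hπ
  rw [h₁ u (hU u hu).1 π hπ, h₂ _ (hU u hu).2 _ hπ₁]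
  rfl

lemma IsDelta.eq_one_of_singleton {s : Finset (Fin n)} (hU : OSPn n [s])
    (hδ : IsDelta ([s].map Finset.card) [s] δ) : δ = 1 := by
  have hs : ∀ x, x ∈ s := fun x => by simpa using hU.2.2 x
  refine Perm.eq_of_lt_iff_lt fun x y => ?_
  simp [hδ.lt_iff hU.2.2, blockKey_lt_blockKey, blockIdx_cons, hs]

variable {s t : Finset (Fin n)} {rest : List (Finset (Fin n))}

lemma OSPn.merge (hU : OSPn n (s :: t :: rest)) : OSPn n ((s ∪ t) :: rest) := by
  obtain ⟨hd, hne, hcov⟩ := hU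
  simp only [List.pairwise_cons, List.mem_cons, forall_eq_or_imp] at hd hne
  refine ⟨List.pairwise_cons.2 ⟨fun r hr => disjoint_union_left.2 ⟨hd.1.2 r hr, hd.2.1 r hr⟩,
    hd.2.2⟩, ?_, fun x => ?_⟩
  · simp only [List.mem_cons, forall_eq_or_imp]
    exact ⟨hne.1.mono subset_union_left, hne.2.2⟩
  · obtain ⟨r, hr, hx⟩ := hcov x
    simp only [List.mem_cons] at hr
    rcases hr with rfl | rfl | hr
    · exact ⟨_, List.mem_cons_self, mem_union_left _ hx⟩
    · exact ⟨_, List.mem_cons_self, mem_union_right _ hx⟩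
    · exact ⟨r, List.mem_cons_of_mem _ hr, hx⟩

lemma OSPn.pair_map (hU : OSPn n (s :: t :: rest)) (e : Perm (Fin n)) :
    OSPn n [s.map e.toEmbedding, (s.map e.toEmbedding)ᶜ] := by
  obtain ⟨hd, hne, -⟩ := hU
  obtain ⟨b, hb⟩ := hne t (by simp)
  have hbs : b ∉ s := disjoint_right.1 ((List.pairwise_cons.1 hd).1 t (by simp)) hb
  refine ⟨by simp [disjoint_compl_right], ?_, fun x => by simp [em]⟩
  simpa using ⟨hne s (by simp), e b, by simpa using hbs⟩

lemma blockIdx_pair_map (e : Perm (Fin n)) (x : Fin n) :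
    blockIdx [s.map e.toEmbedding, (s.map e.toEmbedding)ᶜ] (e x) = if x ∈ s then 0 else 1 := by
  by_cases hx : x ∈ s <;> simp [blockIdx_cons, hx]

end

section

variable {n : ℕ} {s t : Finset (Fin n)} {rest : List (Finset (Fin n))} {δ δV δP : Perm (Fin n)}

lemma IsDelta.eq_mul_of_merge (hU : OSPn n (s :: t :: rest))
    (hδ : IsDelta ((s :: t :: rest).map Finset.card) (s :: t :: rest) δ)
    (hδV : IsDelta (((s ∪ t) :: rest).map Finset.card) ((s ∪ t) :: rest) δV)
    (hδP : IsDelta ([s.map δV.toEmbedding, (s.map δV.toEmbedding)ᶜ].map Finset.card)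
      [s.map δV.toEmbedding, (s.map δV.toEmbedding)ᶜ] δP) :
    δ = δP * δV := by
  refine Perm.eq_of_lt_iff_lt fun x y => ?_
  rw [Perm.mul_apply, Perm.mul_apply, hδ.lt_iff hU.2.2, hδP.lt_iff (hU.pair_map δV).2.2,
    blockKey_lt_blockKey, blockKey_lt_blockKey, hδV.lt_iff hU.merge.2.2, blockKey_lt_blockKey,
    blockIdx_pair_map, blockIdx_pair_map]
  simp only [blockIdx_cons, mem_union]
  split_ifs <;> simp_all

lemma mem_Ustar_merge {u : Fin n} (hu : u ∈ Ustar n (s :: t :: rest)) :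
    u ∈ Ustar n ((s ∪ t) :: rest) := by
  simp only [Ustar, mem_filter, mem_univ, true_and, List.mem_cons, exists_eq_or_imp,
    mem_union] at hu ⊢
  tauto

lemma mem_Ustar_pair_map (hU : OSPn n (s :: t :: rest))
    (hδV : IsDelta (((s ∪ t) :: rest).map Finset.card) ((s ∪ t) :: rest) δV) {u : Fin n}
    (hu : u ∈ Ustar n (s :: t :: rest)) :
    δV u ∈ Ustar n [s.map δV.toEmbedding, (s.map δV.toEmbedding)ᶜ] := by
  have hsucc := hδV.val_finSucc hU.merge.2.2 ((mem_Ustar_iff_s14 hU).1 hu).1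
    ((mem_Ustar_iff_s14 hU.merge).1 (mem_Ustar_merge hu)).2
  have hlt : (δV u : ℕ) + 1 < n := hsucc ▸ (δV (finSucc u)).isLt
  have hfin : finSucc (δV u) = δV (finSucc u) := Fin.ext (by rw [finSucc_val hlt, hsucc])
  rw [mem_Ustar_iff_s14 (hU.pair_map δV), hfin, blockIdx_pair_map, blockIdx_pair_map]
  refine ⟨hlt, ?_⟩
  have := ((mem_Ustar_iff_s14 hU).1 hu).2
  simp only [blockIdx_cons] at this
  split_ifs at this ⊢ <;> omega

end

section

variable {n : ℕ} {B : Multiset (Perm (Fin n))}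

theorem dsymmAt_of_two_blocks
    (H : ∀ s t : Finset (Fin n), OSPn n [s, t] → ∀ δ : Perm (Fin n),
      IsDelta ([s, t].map Finset.card) [s, t] δ → DSymmAt B [s, t] δ)
    (U : List (Finset (Fin n))) (hU : OSPn n U) (δ : Perm (Fin n))
    (hδ : IsDelta (U.map Finset.card) U δ) : DSymmAt B U δ := by
  rcases U with _ | ⟨s, l⟩
  · exact dsymmAt_of_forall_mem_Ustar fun u hu => by simp [Ustar] at hu
  induction l generalizing s δ with
  | nil => exact dsymmAt_of_forall_mem_Ustar fun u _ => by rw [hδ.eq_one_of_singleton hU]; rfl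
  | cons t rest ih =>
    obtain ⟨δV, hδV⟩ := exists_isDelta hU.merge
    obtain ⟨δP, hδP⟩ := exists_isDelta (hU.pair_map δV)
    rw [hδ.eq_mul_of_merge hU hδV hδP]
    exact (ih δV (s ∪ t) hU.merge hδV).mul (H _ _ (hU.pair_map δV) δP hδP)
      fun u hu => ⟨mem_Ustar_merge hu, mem_Ustar_pair_map hU hδV hu⟩

end

/-- `B` is `D`-symmetric iff the defining condition holds for all
ordered set partitions `(U, V)` of `[n]` into exactly two blocks. -/
theorem dsymm_iff_two_blocks (n : ℕ) (B : Multiset (Equiv.Perm (Fin n))) :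
    DSymm n B ↔
      ∀ U V : Finset (Fin n), OSPn n [U, V] →
        ∀ δ : Equiv.Perm (Fin n), IsDelta ([U, V].map Finset.card) [U, V] δ →
          ∃ Ψ : Equiv.Perm (Fin n) → Equiv.Perm (Fin n), B.map Ψ = B ∧
            ∀ u ∈ Ustar n [U, V], ∀ π ∈ B, (u ∈ pDes π ↔ δ u ∈ pDes (Ψ π)) :=
  ⟨fun h U V hUV => h [U, V] hUV, dsymmAt_of_two_blocks⟩
end

section
/- Suppose λ ⊢ n and nonnegative reals C_α are given for each composition α that is a rearrangement of λ. If for each such α and each k ≤ n one has |S_k(α)|·C_α = Σ_{I ∈ S_k(α)} C_{α(I)}, where S_k(α) is the set of subsets I of positions of α with Σ_{i∈I} α_i = k and α(I) is the composition listing the parts indexed by I (in order) followed by the remaining parts (in order), then all the C_α are equal. -/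
open scoped Classical
/-- `S_k(α)`: the sets `I` of positions of the composition `α` with `Σ_{i∈I} α_i = k`. -/
noncomputable def Sk (α : List ℕ) (k : ℕ) : Finset (Finset (Fin α.length)) :=
  Finset.univ.filter fun I => ∑ i ∈ I, α.get i = k

/-- `α(I)`: the parts of `α` indexed by `I` (in order) followed by the remaining parts
(in order). -/
def rearr (α : List ℕ) (I : Finset (Fin α.length)) : List ℕ :=
  ((List.finRange α.length).filter (· ∈ I)).map α.get ++
    ((List.finRange α.length).filter (· ∉ I)).map α.get

/-! Take `α₀` maximising `C` over the rearrangements of `λ`. If `C α = max`, the identity for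
`k = α_i` expresses `C α` as the mean of values `≤ max`, so all of them equal `max`; in
particular `C` of `α` with its `i`-th part moved to the front is `max`. Moving parts to the
front one at a time reaches every rearrangement, so `C` is constant. -/

theorem List.Perm.of_closed_under_moveToFront {α : Type*} {P : List α → Prop}
    (hP : ∀ (l : List α) (i : ℕ) (hi : i < l.length), P l → P (l[i] :: l.eraseIdx i))
    {l₁ l₂ : List α} (h : l₁.Perm l₂) (h₁ : P l₁) : P l₂ := by
  -- Build `l₂` from the back: moving its entries to the front, last one first.
  suffices key : ∀ p s r : List α, P (s ++ r) → r.Perm p → P (p ++ s) by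
    simpa using key l₂ [] l₁ (by simpa using h₁) h
  intro p
  induction p using List.reverseRecOn with
  | nil => intro s r hsr hr; simpa [List.perm_nil.1 hr] using hsr
  | append_singleton q x ih =>
    intro s r hsr hr
    obtain ⟨u, v, rfl⟩ := List.append_of_mem (hr.symm.subset List.mem_concat_self)
    have hmove := hP (s ++ u ++ x :: v) (s ++ u).length (by simp) (by simpa using hsr)
    rw [List.getElem_append_right le_rfl, List.eraseIdx_append_of_length_le le_rfl]
      at hmove
    have huv : (u ++ v).Perm q := by
      simpa using (List.perm_middle.symm.trans hr).trans (List.perm_append_singleton x q)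
    simpa using ih (x :: s) (u ++ v) (by simpa using hmove) huv

theorem rearr_perm (α : List ℕ) (I : Finset (Fin α.length)) : (rearr α I).Perm α := by
  have h := (List.filter_append_perm (· ∈ I) (List.finRange α.length)).map α.get
  rw [List.map_get_finRange] at h
  simpa [rearr, decide_not] using h

theorem List.map_get_filter_finRange_ne {α : Type*} (l : List α) (i : Fin l.length) :
    ((List.finRange l.length).filter (· ≠ i)).map l.get = l.eraseIdx i := by
  have hnd := List.nodup_finRange l.length
  have h := hnd.erase_get ⟨i, by simp⟩
  rw [List.get_finRange, hnd.erase_eq_filter] at h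
  have hl : l.eraseIdx i = ((List.finRange l.length).map l.get).eraseIdx i := by
    rw [List.map_get_finRange]
  rw [hl, List.eraseIdx_map]
  simpa using! congrArg (List.map l.get) h

theorem rearr_singleton (α : List ℕ) (i : Fin α.length) :
    rearr α {i} = α[i] :: α.eraseIdx i := by
  have h : (List.finRange α.length).filter (· = i) = [i] := by
    simp [List.filter_eq, List.count_eq_one_of_mem (List.nodup_finRange _) (List.mem_finRange i)]
  simp only [rearr, Finset.mem_singleton, List.map_get_filter_finRange_ne, h]
  rfl

theorem Multiset.mem_lists_iff_coe_eq {α : Type*} (s : Multiset α) (l : List α) :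
    l ∈ s.lists ↔ (l : Multiset α) = s := by
  rw [Multiset.mem_lists_iff, eq_comm]
  rfl

theorem rearr_singleton_eq_of_forall_perm_le {n : ℕ} {C : List ℕ → ℝ} {M : ℝ} {α : List ℕ}
    (hn : α.sum ≤ n)
    (heq : ∀ k ≤ n, ((Sk α k).card : ℝ) * C α = ∑ I ∈ Sk α k, C (rearr α I))
    (hmax : ∀ β : List ℕ, β.Perm α → C β ≤ M) (hα : C α = M) (i : Fin α.length) :
    C (rearr α {i}) = M := by
  have hk : α[i] ≤ n := (List.le_sum_of_mem (List.getElem_mem _)).trans hn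
  have hle : ∀ I ∈ Sk α α[i], C (rearr α I) ≤ M := fun I _ => hmax _ (rearr_perm α I)
  have hmean : ∑ I ∈ Sk α α[i], C (rearr α I) = ∑ _I ∈ Sk α α[i], M := by
    rw [← heq _ hk, hα, Finset.sum_const, nsmul_eq_mul]
  exact (Finset.sum_eq_sum_iff_of_le hle).1 hmean {i} (by simp [Sk])

theorem constants_equal_general (n : ℕ) (lam : Multiset ℕ) (hsum : lam.sum = n)
    (C : List ℕ → ℝ)
    (heq : ∀ α : List ℕ, (α : Multiset ℕ) = lam → ∀ k ≤ n,
      ((Sk α k).card : ℝ) * C α = ∑ I ∈ Sk α k, C (rearr α I)) :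
    ∀ α β : List ℕ, (α : Multiset ℕ) = lam → (β : Multiset ℕ) = lam → C α = C β := by
  obtain ⟨α₀, hα₀, hmax⟩ := Multiset.exists_max_image C <| Multiset.card_pos.1 <|
    Multiset.card_pos_iff_exists_mem.2 ⟨_, (Multiset.mem_lists_iff_coe_eq _ _).2 lam.coe_toList⟩
  simp only [Multiset.mem_lists_iff_coe_eq] at hα₀ hmax
  have hall : ∀ γ : List ℕ, (γ : Multiset ℕ) = lam → C γ = C α₀ := by
    intro γ hγ
    refine List.Perm.of_closed_under_moveToFront
      (P := fun l => (l : Multiset ℕ) = lam → C l = C α₀) ?_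
      (Multiset.coe_eq_coe.1 (hα₀.trans hγ.symm)) (fun _ => rfl) hγ
    intro l i hi hl hmoved
    have hl_lam : (l : Multiset ℕ) = lam := by
      rw [← hmoved, Multiset.coe_eq_coe]; exact (List.getElem_cons_eraseIdx_perm hi).symm
    have hn : l.sum ≤ n := by rw [← hsum, ← hl_lam, Multiset.sum_coe]
    have h := rearr_singleton_eq_of_forall_perm_le hn (heq l hl_lam)
      (fun β hβ => hmax β (hl_lam ▸ Multiset.coe_eq_coe.2 hβ)) (hl hl_lam) ⟨i, hi⟩
    rwa [rearr_singleton] at h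
  intro α β hα hβ
  rw [hall α hα, hall β hβ]

/-- Let `λ ⊢ n` and let nonnegative reals `C_α` be given for all
compositions `α ∼ λ`.  If `|S_k(α)| · C_α = Σ_{I ∈ S_k(α)} C_{α(I)}` for all such `α`
and all `k ≤ n`, then all the `C_α` are equal. -/
theorem constants_equal (n : ℕ) (lam : Multiset ℕ) (hsum : lam.sum = n)
    (hpos : ∀ x ∈ lam, 0 < x) (C : List ℕ → ℝ)
    (hC : ∀ α : List ℕ, (α : Multiset ℕ) = lam → 0 ≤ C α)
    (heq : ∀ α : List ℕ, (α : Multiset ℕ) = lam → ∀ k ≤ n,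
      ((Sk α k).card : ℝ) * C α = ∑ I ∈ Sk α k, C (rearr α I)) :
    ∀ α β : List ℕ, (α : Multiset ℕ) = lam → (β : Multiset ℕ) = lam → C α = C β :=
  constants_equal_general n lam hsum C heq
end
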